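/- arXiv:2112.08847 — 4 statements merged into one kernel-verified Lean document; each statement's English description precedes it below -/
import Mathlib

section
/- Let v ∈ L¹(ℝⁿ) ∩ L^∞(ℝⁿ) and suppose w ∈ A₀v. Then for every nonnegative f ∈ C_c^∞(ℝⁿ), ∫_{ℝⁿ} w f dx = −∫_{ℝⁿ}∫_{ℝⁿ} ∑_{i=1}^k D^{β_i(h)}f(x) · φ_i(v(x), v(x+β_i(h))) · ω_i(β_i(h)) dh dx. Consequently, A₀ is single-valued at v: if w₁ ∈ A₀v and w₂ ∈ A₀v then w₁ = w₂ almost everywhere. -/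
open MeasureTheory

/-- `w ∈ A₀ v` for the nonlocal conservation-law operator. -/
def memA0 {n k : ℕ}
    (β : Fin k → EuclideanSpace ℝ (Fin n) → EuclideanSpace ℝ (Fin n))
    (ω : Fin k → EuclideanSpace ℝ (Fin n) → ℝ)
    (φ : Fin k → ℝ → ℝ → ℝ)
    (v w : EuclideanSpace ℝ (Fin n) → ℝ) : Prop :=
  MeasureTheory.Integrable v ∧ MeasureTheory.Integrable w ∧
  (∀ (i : Fin k), ∀ h ∈ Function.support fun h => ω i (β i h),
      MeasureTheory.Integrable fun x => φ i (v x) (v (x + β i h))) ∧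
  ∀ f : EuclideanSpace ℝ (Fin n) → ℝ, ContDiff ℝ (⊤ : ℕ∞) f → HasCompactSupport f →
    (∀ x, 0 ≤ f x) → ∀ c : ℝ,
    0 ≤ (∫ x, Real.sign (v x - c) * w x * f x) +
      ∫ x, ∫ h, ∑ i : Fin k,
        ((f (x + β i h) * Real.sign (v (x + β i h) - c)
            - f x * Real.sign (v x - c)) / ‖β i h‖) *
          (φ i (v x) (v (x + β i h)) - φ i c c) * ω i (β i h)

private lemma aux_abs_div_le {a b K : ℝ} (hK : 0 ≤ K) (h : |a| ≤ K * b) (hb : 0 ≤ b) :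
    |a / b| ≤ K := by
  rcases eq_or_lt_of_le hb with hb0 | hb0
  · rw [← hb0] at h ⊢
    rw [div_zero, abs_zero]
    exact hK
  · rw [abs_div, abs_of_pos hb0, div_le_iff₀ hb0]
    exact h

private lemma aux_integral_sub {α : Type*} [MeasurableSpace α] (μ : Measure α) (Q H : α → ℝ)
    (hH : Integrable H μ) (hH0 : (∫ x, H x ∂μ) = 0) :
    (∫ x, (Q x - H x) ∂μ) = ∫ x, Q x ∂μ := by
  by_cases hQ : Integrable Q μ
  · rw [integral_sub hQ hH, hH0, sub_zero]
  · have h2 : ¬ Integrable (fun x => Q x - H x) μ := by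
      intro h
      have h3 : Integrable (fun x => (Q x - H x) + H x) μ := h.add hH
      exact hQ (by simpa using h3)
    rw [integral_undef h2, integral_undef hQ]

private lemma key_eq {n k : ℕ}
    (β : Fin k → EuclideanSpace ℝ (Fin n) → EuclideanSpace ℝ (Fin n))
    (ω : Fin k → EuclideanSpace ℝ (Fin n) → ℝ)
    (φ : Fin k → ℝ → ℝ → ℝ)
    (v w : EuclideanSpace ℝ (Fin n) → ℝ) (C : ℝ)
    (hβcont : ∀ i, Continuous (β i))
    (hωnn : ∀ i x, 0 ≤ ω i x)
    (hWint : ∀ i, Integrable fun h => ω i (β i h))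
    (hφmono : ∀ i b, Monotone fun a => φ i a b)
    (hφanti : ∀ i a, Antitone fun b => φ i a b)
    (hvmeas : AEStronglyMeasurable v volume)
    (hC : ∀ᵐ x, |v x| ≤ C) (hC0 : 0 ≤ C)
    (hw : memA0 β ω φ v w)
    (f : EuclideanSpace ℝ (Fin n) → ℝ) (hfsm : ContDiff ℝ (⊤ : ℕ∞) f)
    (hfc : HasCompactSupport f) (hfnn : ∀ x, 0 ≤ f x) :
    (∫ x, w x * f x) =
      -∫ x, ∫ h, ∑ i : Fin k,
        ((f (x + β i h) - f x) / ‖β i h‖) * φ i (v x) (v (x + β i h)) * ω i (β i h) := by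
  classical
  -- the shear map is measure preserving
  have hT : ∀ i, MeasurePreserving
      (fun z : EuclideanSpace ℝ (Fin n) × EuclideanSpace ℝ (Fin n) => (z.1 + β i z.2, z.2))
      ((volume : Measure (EuclideanSpace ℝ (Fin n))).prod volume) (volume.prod volume) := by
    intro i
    have hskew : MeasurePreserving
        (fun p : EuclideanSpace ℝ (Fin n) × EuclideanSpace ℝ (Fin n) => (p.1, p.2 + β i p.1))
        ((volume : Measure (EuclideanSpace ℝ (Fin n))).prod volume) (volume.prod volume) := by
      exact MeasurePreserving.skew_product (g := fun a c => c + β i a)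
        (MeasurePreserving.id _)
        (measurable_snd.add ((hβcont i).measurable.comp measurable_fst))
        (Filter.Eventually.of_forall fun a => map_add_right_eq_self volume (β i a))
    have hswap : MeasurePreserving
        (Prod.swap : EuclideanSpace ℝ (Fin n) × EuclideanSpace ℝ (Fin n) →
          EuclideanSpace ℝ (Fin n) × EuclideanSpace ℝ (Fin n))
        ((volume : Measure (EuclideanSpace ℝ (Fin n))).prod volume) (volume.prod volume) :=
      Measure.measurePreserving_swap
    have hcomp := hswap.comp (hskew.comp hswap)
    have heq : (Prod.swap ∘ (fun p : EuclideanSpace ℝ (Fin n) × EuclideanSpace ℝ (Fin n) =>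
        (p.1, p.2 + β i p.1)) ∘ Prod.swap) =
        fun z : EuclideanSpace ℝ (Fin n) × EuclideanSpace ℝ (Fin n) => (z.1 + β i z.2, z.2) := rfl
    rwa [heq] at hcomp
  -- transporting a.e. properties along the shear
  have shear_ae : ∀ (i : Fin k) (p : EuclideanSpace ℝ (Fin n) → Prop), (∀ᵐ y, p y) →
      ∀ᵐ x, ∀ᵐ h, p (x + β i h) := by
    intro i p hp
    obtain ⟨N, hsub, hNm, hN0⟩ := exists_measurable_superset_of_null (ae_iff.mp hp)
    have h0 : ((volume : Measure (EuclideanSpace ℝ (Fin n))).prod volume)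
        ((fun z : EuclideanSpace ℝ (Fin n) × EuclideanSpace ℝ (Fin n) =>
          (z.1 + β i z.2, z.2)) ⁻¹' (N ×ˢ Set.univ)) = 0 := by
      rw [(hT i).measure_preimage (hNm.prod MeasurableSet.univ).nullMeasurableSet]
      rw [Measure.prod_prod, hN0, zero_mul]
    have hae2 : ∀ᵐ z ∂((volume : Measure (EuclideanSpace ℝ (Fin n))).prod volume),
        p (z.1 + β i z.2) := by
      rw [ae_iff]
      refine measure_mono_null ?_ h0
      intro z hz
      simp only [Set.mem_setOf_eq] at hz
      have hmem : z.1 + β i z.2 ∈ N := hsub hz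
      simp [Set.mem_preimage, Set.mem_prod, hmem]
    exact Measure.ae_ae_of_ae_prod hae2
  -- measurable representative of v
  set vm := hvmeas.mk v with hvmdef
  have hvm_meas : StronglyMeasurable vm := hvmeas.stronglyMeasurable_mk
  have hvm_ae : v =ᵐ[volume] vm := hvmeas.ae_eq_mk
  -- Lipschitz bound for f
  obtain ⟨K, hK⟩ := ContDiff.lipschitzWith_of_hasCompactSupport hfc hfsm (by simp)
  set KR : ℝ := (K : ℝ) with hKRdef
  have hKR0 : (0 : ℝ) ≤ KR := K.coe_nonneg
  have hDfbd : ∀ (i : Fin k) (x h : EuclideanSpace ℝ (Fin n)),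
      |(f (x + β i h) - f x) / ‖β i h‖| ≤ KR := by
    intro i x h
    refine aux_abs_div_le hKR0 ?_ (norm_nonneg _)
    have hd := hK.dist_le_mul (x + β i h) x
    rw [Real.dist_eq] at hd
    calc |f (x + β i h) - f x| ≤ KR * dist (x + β i h) x := hd
      _ = KR * ‖β i h‖ := by rw [dist_eq_norm, add_sub_cancel_left]
  have hfint : Integrable f := hfsm.continuous.integrable_of_hasCompactSupport hfc
  set Kf := tsupport f with hKfdef
  have hKfc : IsCompact Kf := hfc
  set ind : EuclideanSpace ℝ (Fin n) → ℝ := Kf.indicator (fun _ => KR) with hinddef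
  have hindint : Integrable ind := by
    rw [hinddef, integrable_indicator_iff hKfc.measurableSet]
    exact integrableOn_const hKfc.measure_lt_top.ne
  have hindnn : ∀ x, 0 ≤ ind x := fun x => Set.indicator_nonneg (fun _ _ => hKR0) x
  set F : Fin k → EuclideanSpace ℝ (Fin n) × EuclideanSpace ℝ (Fin n) → ℝ :=
    fun i z => ((f (z.1 + β i z.2) - f z.1) / ‖β i z.2‖) * ω i (β i z.2) with hFdef
  have hFmeas : ∀ i, AEStronglyMeasurable (F i)
      ((volume : Measure (EuclideanSpace ℝ (Fin n))).prod volume) := by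
    intro i
    have hnum : Continuous fun z : EuclideanSpace ℝ (Fin n) × EuclideanSpace ℝ (Fin n) =>
        f (z.1 + β i z.2) - f z.1 :=
      (hfsm.continuous.comp (continuous_fst.add ((hβcont i).comp continuous_snd))).sub
        (hfsm.continuous.comp continuous_fst)
    have hden : Continuous fun z : EuclideanSpace ℝ (Fin n) × EuclideanSpace ℝ (Fin n) =>
        ‖β i z.2‖ := continuous_norm.comp ((hβcont i).comp continuous_snd)
    exact ((hnum.measurable.div hden.measurable).aestronglyMeasurable).mul
      ((hWint i).aestronglyMeasurable.comp_snd)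
  have hG2int : ∀ i, Integrable
      (fun z : EuclideanSpace ℝ (Fin n) × EuclideanSpace ℝ (Fin n) =>
        ind (z.1 + β i z.2) * ω i (β i z.2))
      ((volume : Measure (EuclideanSpace ℝ (Fin n))).prod volume) := by
    intro i
    have h1 : Integrable (fun z : EuclideanSpace ℝ (Fin n) × EuclideanSpace ℝ (Fin n) =>
        ind z.1 * ω i (β i z.2)) ((volume : Measure (EuclideanSpace ℝ (Fin n))).prod volume) :=
      hindint.mul_prod (hWint i)
    have h2 := ((hT i).integrable_comp h1.aestronglyMeasurable).mpr h1
    exact h2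
  have hFint : ∀ i, Integrable (F i)
      ((volume : Measure (EuclideanSpace ℝ (Fin n))).prod volume) := by
    intro i
    have h1 : Integrable (fun z : EuclideanSpace ℝ (Fin n) × EuclideanSpace ℝ (Fin n) =>
        ind z.1 * ω i (β i z.2)) ((volume : Measure (EuclideanSpace ℝ (Fin n))).prod volume) :=
      hindint.mul_prod (hWint i)
    refine (h1.add (hG2int i)).mono' (hFmeas i) (Filter.Eventually.of_forall fun z => ?_)
    have hDle : |(f (z.1 + β i z.2) - f z.1) / ‖β i z.2‖| ≤ ind z.1 + ind (z.1 + β i z.2) := by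
      by_cases h1m : z.1 ∈ Kf
      · have hKRle : KR ≤ ind z.1 + ind (z.1 + β i z.2) := by
          rw [hinddef]
          rw [Set.indicator_of_mem h1m]
          exact le_add_of_nonneg_right (hindnn _)
        exact (hDfbd i z.1 z.2).trans hKRle
      · by_cases h2m : z.1 + β i z.2 ∈ Kf
        · have hKRle : KR ≤ ind z.1 + ind (z.1 + β i z.2) := by
            rw [hinddef]
            rw [Set.indicator_of_mem h2m]
            exact le_add_of_nonneg_left (hindnn _)
          exact (hDfbd i z.1 z.2).trans hKRle
        · have e1 : f z.1 = 0 := image_eq_zero_of_notMem_tsupport h1m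
          have e2 : f (z.1 + β i z.2) = 0 := image_eq_zero_of_notMem_tsupport h2m
          simp only [e1, e2, sub_zero, zero_div, sub_self, abs_zero]
          exact add_nonneg (hindnn _) (hindnn _)
    have : ‖F i z‖ = |(f (z.1 + β i z.2) - f z.1) / ‖β i z.2‖| * ω i (β i z.2) := by
      rw [hFdef]
      simp only [Real.norm_eq_abs, abs_mul, abs_of_nonneg (hωnn i _)]
    rw [this]
    calc |(f (z.1 + β i z.2) - f z.1) / ‖β i z.2‖| * ω i (β i z.2)
        ≤ (ind z.1 + ind (z.1 + β i z.2)) * ω i (β i z.2) :=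
          mul_le_mul_of_nonneg_right hDle (hωnn i _)
      _ = ind z.1 * ω i (β i z.2) + ind (z.1 + β i z.2) * ω i (β i z.2) := add_mul _ _ _
  have hDf0 : ∀ (i : Fin k) (h : EuclideanSpace ℝ (Fin n)),
      (∫ x, (f (x + β i h) - f x) / ‖β i h‖) = 0 := by
    intro i h
    by_cases hy : β i h = 0
    · have hz : (fun x : EuclideanSpace ℝ (Fin n) => (f (x + β i h) - f x) / ‖β i h‖) =
          fun _ => 0 := by
        funext x
        rw [hy, add_zero, sub_self, zero_div]
      rw [hz, integral_zero]
    · rw [integral_div, integral_sub (hfint.comp_add_right (β i h)) hfint,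
        integral_add_right_eq_self f (β i h), sub_self, zero_div]
  have hF0 : ∀ i, (∫ x, ∫ h, F i (x, h)) = 0 := by
    intro i
    rw [integral_integral_swap (by exact hFint i)]
    have hx0 : ∀ h : EuclideanSpace ℝ (Fin n), (∫ x, F i (x, h)) = 0 := by
      intro h
      have hFh : (fun x => F i (x, h)) =
          fun x => ((f (x + β i h) - f x) / ‖β i h‖) * ω i (β i h) := by
        funext x
        rw [hFdef]
      rw [hFh, integral_mul_const, hDf0 i h, zero_mul]
    simp only [hx0, integral_zero]
  have hFslice : ∀ i, ∀ᵐ x : EuclideanSpace ℝ (Fin n), Integrable (fun h => F i (x, h)) :=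
    fun i => (hFint i).prod_right_ae
  set M : Fin k → ℝ := fun i => max (φ i C (-C)) (-(φ i (-C) C)) with hMdef
  have hφbd : ∀ (i : Fin k) (a b : ℝ), |a| ≤ C → |b| ≤ C → |φ i a b| ≤ M i := by
    intro i a b ha hb
    rw [abs_le] at ha hb
    rw [abs_le]
    constructor
    · have h1 : φ i (-C) C ≤ φ i a C := hφmono i C ha.1
      have h2 : φ i a C ≤ φ i a b := hφanti i a hb.2
      calc -(M i) ≤ -(-(φ i (-C) C)) := neg_le_neg (le_max_right _ _)
        _ = φ i (-C) C := neg_neg _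
        _ ≤ φ i a b := h1.trans h2
    · calc φ i a b ≤ φ i a (-C) := hφanti i a hb.1
        _ ≤ φ i C (-C) := hφmono i (-C) ha.2
        _ ≤ M i := le_max_left _ _
  obtain ⟨hvint, hwint, hslice, hineq⟩ := hw
  set Qf : EuclideanSpace ℝ (Fin n) → ℝ := fun x => ∫ h, ∑ i : Fin k,
      ((f (x + β i h) - f x) / ‖β i h‖) * φ i (v x) (v (x + β i h)) * ω i (β i h) with hQfdef
  have step : ∀ c s : ℝ, (∀ y : ℝ, |y| ≤ C → Real.sign (y - c) = s) →
      0 ≤ s * (∫ x, w x * f x) + s * ∫ x, Qf x := by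
    intro c s hsgn
    have base := hineq f hfsm hfc hfnn c
    set Hc : EuclideanSpace ℝ (Fin n) → ℝ := fun x => ∑ i : Fin k, φ i c c * ∫ h, F i (x, h)
      with hHcdef
    have hHcint : Integrable Hc := by
      rw [hHcdef]
      exact integrable_finset_sum _ fun i _ => ((hFint i).integral_prod_left).const_mul _
    have hHc0 : (∫ x, Hc x) = 0 := by
      rw [hHcdef, integral_finset_sum _ fun i _ => ((hFint i).integral_prod_left).const_mul _]
      refine Finset.sum_eq_zero fun i _ => ?_
      rw [integral_const_mul, hF0 i, mul_zero]
    have hfirst : (∫ x, Real.sign (v x - c) * w x * f x) = s * ∫ x, w x * f x := by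
      have hcongr : (fun x => Real.sign (v x - c) * w x * f x) =ᵐ[volume]
          fun x => s * (w x * f x) := by
        filter_upwards [hC] with x hx
        rw [hsgn (v x) hx, mul_assoc]
      rw [integral_congr_ae hcongr, integral_const_mul]
    have hsecond : (∫ x, ∫ h, ∑ i : Fin k,
        ((f (x + β i h) * Real.sign (v (x + β i h) - c)
            - f x * Real.sign (v x - c)) / ‖β i h‖) *
          (φ i (v x) (v (x + β i h)) - φ i c c) * ω i (β i h)) = s * ∫ x, Qf x := by
      have hae : (fun x => ∫ h, ∑ i : Fin k,
          ((f (x + β i h) * Real.sign (v (x + β i h) - c)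
              - f x * Real.sign (v x - c)) / ‖β i h‖) *
            (φ i (v x) (v (x + β i h)) - φ i c c) * ω i (β i h)) =ᵐ[volume]
          fun x => s * (Qf x - Hc x) := by
        filter_upwards [hC, ae_all_iff.2 (fun i => shear_ae i (fun y => |v y| ≤ C) hC),
          ae_all_iff.2 (fun i => shear_ae i (fun y => v y = vm y) hvm_ae),
          ae_all_iff.2 hFslice] with x hx1 hx2 hx3 hx4
        have hq : ∀ i, Integrable (fun h => ((f (x + β i h) - f x) / ‖β i h‖) *
            φ i (v x) (v (x + β i h)) * ω i (β i h)) := by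
          intro i
          have hmes : AEStronglyMeasurable (fun h => ((f (x + β i h) - f x) / ‖β i h‖) *
              φ i (v x) (v (x + β i h)) * ω i (β i h)) volume := by
            have m1 : Measurable fun h : EuclideanSpace ℝ (Fin n) =>
                (f (x + β i h) - f x) / ‖β i h‖ :=
              (((hfsm.continuous.comp (continuous_const.add (hβcont i))).sub
                continuous_const).measurable).div
                (continuous_norm.comp (hβcont i)).measurable
            have m2 : Measurable fun h : EuclideanSpace ℝ (Fin n) =>
                φ i (v x) (vm (x + β i h)) :=
              ((hφanti i (v x)).measurable).comp
                (hvm_meas.measurable.comp (continuous_const.add (hβcont i)).measurable)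
            have hmk : AEStronglyMeasurable (fun h => ((f (x + β i h) - f x) / ‖β i h‖) *
                φ i (v x) (vm (x + β i h)) * ω i (β i h)) volume :=
              ((m1.mul m2).aestronglyMeasurable).mul (hWint i).aestronglyMeasurable
            refine hmk.congr ?_
            filter_upwards [hx3 i] with h hh
            rw [hh]
          refine Integrable.mono' ((hWint i).const_mul (KR * M i)) hmes ?_
          filter_upwards [hx2 i] with h hb
          have h2 : |φ i (v x) (v (x + β i h))| ≤ M i := hφbd i _ _ hx1 hb
          have hnorm : ‖((f (x + β i h) - f x) / ‖β i h‖) *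
              φ i (v x) (v (x + β i h)) * ω i (β i h)‖ =
              |(f (x + β i h) - f x) / ‖β i h‖| * |φ i (v x) (v (x + β i h))| *
                ω i (β i h) := by
            rw [Real.norm_eq_abs, abs_mul, abs_mul, abs_of_nonneg (hωnn i _)]
          rw [hnorm]
          exact mul_le_mul_of_nonneg_right
            (mul_le_mul (hDfbd i x h) h2 (abs_nonneg _) hKR0) (hωnn i _)
        have hr : ∀ i, Integrable (fun h => ((f (x + β i h) - f x) / ‖β i h‖) *
            φ i c c * ω i (β i h)) := by
          intro i
          have hrw : (fun h => ((f (x + β i h) - f x) / ‖β i h‖) * φ i c c * ω i (β i h)) =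
              fun h => F i (x, h) * φ i c c := by
            funext h
            rw [hFdef]
            ring
          rw [hrw]
          exact (hx4 i).mul_const _
        have hinn : (fun h => ∑ i : Fin k,
            ((f (x + β i h) * Real.sign (v (x + β i h) - c)
                - f x * Real.sign (v x - c)) / ‖β i h‖) *
              (φ i (v x) (v (x + β i h)) - φ i c c) * ω i (β i h)) =ᵐ[volume]
            fun h => s * ∑ i : Fin k,
              (((f (x + β i h) - f x) / ‖β i h‖) * φ i (v x) (v (x + β i h)) * ω i (β i h) -
                ((f (x + β i h) - f x) / ‖β i h‖) * φ i c c * ω i (β i h)) := by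
          filter_upwards [ae_all_iff.2 fun i => hx2 i] with h hb2
          rw [Finset.mul_sum]
          refine Finset.sum_congr rfl fun i _ => ?_
          rw [hsgn (v (x + β i h)) (hb2 i), hsgn (v x) hx1]
          ring
        have hqr : ∀ i : Fin k, Integrable (fun h =>
            ((f (x + β i h) - f x) / ‖β i h‖) * φ i (v x) (v (x + β i h)) * ω i (β i h) -
            ((f (x + β i h) - f x) / ‖β i h‖) * φ i c c * ω i (β i h)) :=
          fun i => (hq i).sub (hr i)
        rw [integral_congr_ae hinn, integral_const_mul]
        congr 1
        rw [integral_finset_sum _ fun i _ => hqr i]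
        have hQx : Qf x = ∑ i : Fin k, ∫ h, ((f (x + β i h) - f x) / ‖β i h‖) *
            φ i (v x) (v (x + β i h)) * ω i (β i h) := by
          rw [hQfdef]
          exact integral_finset_sum _ fun i _ => hq i
        have hHx : Hc x = ∑ i : Fin k, ∫ h, ((f (x + β i h) - f x) / ‖β i h‖) *
            φ i c c * ω i (β i h) := by
          rw [hHcdef]
          refine Finset.sum_congr rfl fun i _ => ?_
          have hrw : (fun h => ((f (x + β i h) - f x) / ‖β i h‖) * φ i c c * ω i (β i h)) =
              fun h => φ i c c * F i (x, h) := by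
            funext h
            rw [hFdef]
            ring
          rw [hrw, integral_const_mul]
        rw [hQx, hHx, ← Finset.sum_sub_distrib]
        exact Finset.sum_congr rfl fun i _ => integral_sub (hq i) (hr i)
      rw [integral_congr_ae hae, integral_const_mul,
        aux_integral_sub volume Qf Hc hHcint hHc0]
    rw [hfirst, hsecond] at base
    exact base
  have h1 := step (C + 1) (-1) (fun y hy => Real.sign_of_neg (by
    have := (abs_le.mp hy).2
    linarith))
  have h2 := step (-(C + 1)) 1 (fun y hy => Real.sign_of_pos (by
    have := (abs_le.mp hy).1
    linarith))
  have hfin : (∫ x, w x * f x) = -∫ x, Qf x := by linarith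
  exact hfin

theorem stmt2
    (n k : ℕ) (hn : 1 ≤ n) (hk : 1 ≤ k) (hkn : k ≤ n)
    (Bsets : Fin k → Finset (Fin n))
    (hBne : ∀ i, (Bsets i).Nonempty)
    (hBdisj : ∀ i j, i ≠ j → Disjoint (Bsets i) (Bsets j))
    (hBcover : ∀ j : Fin n, ∃ i, j ∈ Bsets i)
    (β : Fin k → EuclideanSpace ℝ (Fin n) → EuclideanSpace ℝ (Fin n))
    (hβ : ∀ (i : Fin k) (h : EuclideanSpace ℝ (Fin n)) (j : Fin n),
      β i h j = if j ∈ Bsets i then h j else 0)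
    (ω : Fin k → EuclideanSpace ℝ (Fin n) → ℝ)
    (hωint : ∀ i, Integrable (ω i))
    (hωbdd : ∀ i, ∃ M, ∀ x, ω i x ≤ M)
    (hωnn : ∀ i x, 0 ≤ ω i x)
    (hωsupp : ∀ i, HasCompactSupport (ω i))
    (hωnorm : ∀ i, (∫ h, ω i (β i h)) = 1)
    (φ : Fin k → ℝ → ℝ → ℝ)
    (hφmono : ∀ i b, Monotone fun a => φ i a b)
    (hφanti : ∀ i a, Antitone fun b => φ i a b)
    (hφ0 : ∀ i, φ i 0 0 = 0)
    (v w : EuclideanSpace ℝ (Fin n) → ℝ)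
    (hvinf : MemLp v ⊤ volume)
    (hw : memA0 β ω φ v w) :
    (∀ f : EuclideanSpace ℝ (Fin n) → ℝ, ContDiff ℝ (⊤ : ℕ∞) f → HasCompactSupport f →
      (∀ x, 0 ≤ f x) →
      (∫ x, w x * f x) =
        -∫ x, ∫ h, ∑ i : Fin k,
          ((f (x + β i h) - f x) / ‖β i h‖) * φ i (v x) (v (x + β i h)) * ω i (β i h)) ∧
    ∀ w₁ w₂ : EuclideanSpace ℝ (Fin n) → ℝ,
      memA0 β ω φ v w₁ → memA0 β ω φ v w₂ → w₁ =ᵐ[volume] w₂ := by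
  classical
  have hβcont : ∀ i, Continuous (β i) := by
    intro i
    have hrw : β i = fun h => (WithLp.toLp 2 (fun j => if j ∈ Bsets i then h j else 0) :
        EuclideanSpace ℝ (Fin n)) := by
      funext h
      ext j
      exact hβ i h j
    rw [hrw]
    refine (PiLp.continuous_toLp 2 _).comp (continuous_pi fun j => ?_)
    by_cases hj : j ∈ Bsets i
    · simp only [hj, if_true]
      exact PiLp.continuous_apply 2 _ j
    · simp only [hj, if_false]
      exact continuous_const
  have hWint : ∀ i, Integrable fun h => ω i (β i h) := by
    intro i
    by_contra hni
    exact one_ne_zero ((hωnorm i).symm.trans (integral_undef hni))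
  set C := (eLpNorm v ⊤ volume).toReal with hCdef
  have hC0 : 0 ≤ C := ENNReal.toReal_nonneg
  have hC : ∀ᵐ x, |v x| ≤ C := by
    have h1 : ∀ᵐ x, (‖v x‖₊ : ENNReal) ≤ eLpNormEssSup v volume := ae_le_eLpNormEssSup
    have hlt : eLpNormEssSup v volume < ⊤ := by
      have h2 := hvinf.2
      rwa [eLpNorm_exponent_top] at h2
    filter_upwards [h1] with x hx
    have h3 : ((‖v x‖₊ : ENNReal)).toReal ≤ (eLpNormEssSup v volume).toReal :=
      ENNReal.toReal_mono hlt.ne hx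
    simpa [hCdef, eLpNorm_exponent_top, Real.norm_eq_abs] using h3
  have key : ∀ w' : EuclideanSpace ℝ (Fin n) → ℝ, memA0 β ω φ v w' →
      ∀ f : EuclideanSpace ℝ (Fin n) → ℝ, ContDiff ℝ (⊤ : ℕ∞) f → HasCompactSupport f →
      (∀ x, 0 ≤ f x) →
      (∫ x, w' x * f x) =
        -∫ x, ∫ h, ∑ i : Fin k,
          ((f (x + β i h) - f x) / ‖β i h‖) * φ i (v x) (v (x + β i h)) * ω i (β i h) :=
    fun w' hw' f hf1 hf2 hf3 =>
      key_eq β ω φ v w' C hβcont hωnn hWint hφmono hφanti hvinf.1 hC hC0 hw' f hf1 hf2 hf3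
  constructor
  · exact key w hw
  · intro w₁ w₂ hw₁ hw₂
    have hbd : ∀ (u : EuclideanSpace ℝ (Fin n) → ℝ), Integrable u →
        ∀ (p : EuclideanSpace ℝ (Fin n) → ℝ), ContDiff ℝ (⊤ : ℕ∞) p → HasCompactSupport p →
        Integrable (fun x => u x * p x) := by
      intro u hu p hp1 hp2
      obtain ⟨Mp, hMp⟩ := hp2.exists_bound_of_continuous hp1.continuous
      have := hu.bdd_mul (c := Mp) hp1.continuous.aestronglyMeasurable (Filter.Eventually.of_forall hMp)
      simpa [mul_comm] using this
    have hsame : ∀ f : EuclideanSpace ℝ (Fin n) → ℝ, ContDiff ℝ (⊤ : ℕ∞) f →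
        HasCompactSupport f → (∀ x, 0 ≤ f x) →
        (∫ x, w₁ x * f x) = ∫ x, w₂ x * f x :=
      fun f a b c => (key w₁ hw₁ f a b c).trans (key w₂ hw₂ f a b c).symm
    have hall : ∀ g : EuclideanSpace ℝ (Fin n) → ℝ, ContDiff ℝ (⊤ : ℕ∞) g →
        HasCompactSupport g → (∫ x, w₁ x * g x) = ∫ x, w₂ x * g x := by
      intro g hg1 hg2
      obtain ⟨R, hR0, hsubR⟩ : ∃ R : ℝ, 0 < R ∧ tsupport g ⊆ Metric.closedBall 0 R := by
        obtain ⟨r, hr⟩ := hg2.isBounded.subset_closedBall (0 : EuclideanSpace ℝ (Fin n))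
        exact ⟨max r 1, lt_of_lt_of_le zero_lt_one (le_max_right _ _),
          hr.trans (Metric.closedBall_subset_closedBall (le_max_left _ _))⟩
      set ψb : ContDiffBump (0 : EuclideanSpace ℝ (Fin n)) := ⟨R, R + 1, hR0, by linarith⟩
        with hψbdef
      obtain ⟨Mg, hMg⟩ := hg2.exists_bound_of_continuous hg1.continuous
      have hMg0 : 0 ≤ Mg := (norm_nonneg (g 0)).trans (hMg 0)
      set θ : EuclideanSpace ℝ (Fin n) → ℝ := fun x => Mg * ψb x with hθdef
      have hθs : ContDiff ℝ (⊤ : ℕ∞) θ := contDiff_const.mul ψb.contDiff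
      have hθc : HasCompactSupport θ := ψb.hasCompactSupport.mul_left
      have hθnn : ∀ x, 0 ≤ θ x := fun x => mul_nonneg hMg0 ψb.nonneg
      have hgθnn : ∀ x, 0 ≤ g x + θ x := by
        intro x
        by_cases hx : x ∈ tsupport g
        · have hψ1 : ψb x = 1 := ψb.one_of_mem_closedBall (hsubR hx)
          have habs : |g x| ≤ Mg := by
            have := hMg x
            rwa [Real.norm_eq_abs] at this
          have := (abs_le.mp habs).1
          simp only [hθdef, hψ1, mul_one]
          linarith
        · have hg0 : g x = 0 := image_eq_zero_of_notMem_tsupport hx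
          rw [hg0, zero_add]
          exact hθnn x
      have e1 := hsame (fun x => g x + θ x) (hg1.add hθs) (hg2.add hθc) hgθnn
      have e2 := hsame θ hθs hθc hθnn
      have i1g := hbd w₁ hw₁.2.1 g hg1 hg2
      have i1θ := hbd w₁ hw₁.2.1 θ hθs hθc
      have i2g := hbd w₂ hw₂.2.1 g hg1 hg2
      have i2θ := hbd w₂ hw₂.2.1 θ hθs hθc
      have d1 : (∫ x, w₁ x * (g x + θ x)) = (∫ x, w₁ x * g x) + ∫ x, w₁ x * θ x := by
        have hrw : (fun x => w₁ x * (g x + θ x)) =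
            fun x => w₁ x * g x + w₁ x * θ x := funext fun x => by ring
        rw [hrw, integral_add i1g i1θ]
      have d2 : (∫ x, w₂ x * (g x + θ x)) = (∫ x, w₂ x * g x) + ∫ x, w₂ x * θ x := by
        have hrw : (fun x => w₂ x * (g x + θ x)) =
            fun x => w₂ x * g x + w₂ x * θ x := funext fun x => by ring
        rw [hrw, integral_add i2g i2θ]
      rw [d1, d2] at e1
      linarith
    have hloc : LocallyIntegrable (fun x => w₁ x - w₂ x) volume :=
      (hw₁.2.1.sub hw₂.2.1).locallyIntegrable
    have hzero : ∀ᵐ x ∂(volume : Measure (EuclideanSpace ℝ (Fin n))), w₁ x - w₂ x = 0 := by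
      refine ae_eq_zero_of_integral_contDiff_smul_eq_zero hloc ?_
      intro g hg1 hg2
      have hint1 := hbd w₁ hw₁.2.1 g hg1 hg2
      have hint2 := hbd w₂ hw₂.2.1 g hg1 hg2
      have hrw : (fun x => g x • (w₁ x - w₂ x)) =
          fun x => w₁ x * g x - w₂ x * g x := funext fun x => by
        simp only [smul_eq_mul]
        ring
      rw [hrw, integral_sub hint1 hint2, hall g hg1 hg2, sub_self]
    filter_upwards [hzero] with x hx
    exact sub_eq_zero.mp hx
end

section
/- Suppose each flux φ_i is continuously differentiable on ℝ × ℝ with bounded partial derivatives, and let λ, ε > 0. Let u : ℝⁿ → ℝ be a bounded C² function with u, |∇u|, Δu ∈ L¹(ℝⁿ) ∩ L²(ℝⁿ), and let g ∈ L¹(ℝⁿ) ∩ L^∞(ℝⁿ). If u(x) + λ(Bu)(x) − εΔu(x) = g(x) for almost every x ∈ ℝⁿ, then ‖u‖_{L¹(ℝⁿ)} ≤ ‖g‖_{L¹(ℝⁿ)}. -/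
open MeasureTheory Filter

lemma st5_sign_meas : Measurable (Real.sign) := by
  unfold Real.sign
  exact (measurable_const.ite measurableSet_Iio (measurable_const.ite measurableSet_Ioi measurable_const))

lemma st5_sign_mul_self (r : ℝ) : Real.sign r * r = |r| := by
  rcases lt_trichotomy r 0 with h|h|h
  · rw [Real.sign_of_neg h, abs_of_neg h]; ring
  · simp [h]
  · rw [Real.sign_of_pos h, abs_of_pos h]; ring

lemma st5_sign_abs_le (r : ℝ) : |Real.sign r| ≤ 1 := by
  rcases lt_trichotomy r 0 with h|h|h
  · rw [Real.sign_of_neg h]; norm_num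
  · simp [h]
  · rw [Real.sign_of_pos h]; norm_num

lemma st5_sign_flux_nonneg (φ : ℝ → ℝ → ℝ) (hmono : ∀ b, Monotone fun a => φ a b)
    (hanti : ∀ a, Antitone fun b => φ a b) (h0 : φ 0 0 = 0) (a b : ℝ) :
    0 ≤ (Real.sign a - Real.sign b) * φ a b := by
  have key : ∀ x y : ℝ, 0 ≤ x → y ≤ 0 → 0 ≤ φ x y := fun x y hx hy => by
    calc (0:ℝ) = φ 0 0 := h0.symm
    _ ≤ φ x 0 := hmono 0 hx
    _ ≤ φ x y := hanti x hy
  have key2 : ∀ x y : ℝ, x ≤ 0 → 0 ≤ y → φ x y ≤ 0 := fun x y hx hy => by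
    calc φ x y ≤ φ 0 y := hmono y hx
    _ ≤ φ 0 0 := hanti 0 hy
    _ = 0 := h0
  rcases lt_trichotomy a 0 with ha|ha|ha <;> rcases lt_trichotomy b 0 with hb|hb|hb
  · simp [Real.sign_of_neg ha, Real.sign_of_neg hb]
  · subst hb
    rw [Real.sign_of_neg ha, Real.sign_zero]
    nlinarith [key2 a 0 ha.le le_rfl]
  · rw [Real.sign_of_neg ha, Real.sign_of_pos hb]
    nlinarith [key2 a b ha.le hb.le]
  · subst ha
    rw [Real.sign_zero, Real.sign_of_neg hb]
    nlinarith [key 0 b le_rfl hb.le]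
  · simp [ha, hb]
  · subst ha
    rw [Real.sign_zero, Real.sign_of_pos hb]
    nlinarith [key2 0 b le_rfl hb.le]
  · rw [Real.sign_of_pos ha, Real.sign_of_neg hb]
    nlinarith [key a b ha.le hb.le]
  · subst hb
    rw [Real.sign_of_pos ha, Real.sign_zero]
    nlinarith [key a 0 ha.le le_rfl]
  · simp [Real.sign_of_pos ha, Real.sign_of_pos hb]

noncomputable def sApp (δ r : ℝ) : ℝ := r / Real.sqrt (δ + r ^ 2)
noncomputable def sApp' (δ r : ℝ) : ℝ := δ / (Real.sqrt (δ + r ^ 2)) ^ 3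

lemma sApp_hasDerivAt (δ : ℝ) (hδ : 0 < δ) (r : ℝ) :
    HasDerivAt (sApp δ) (sApp' δ r) r := by
  have hq : 0 < δ + r ^ 2 := by positivity
  set t := Real.sqrt (δ + r ^ 2) with ht
  have hs : 0 < t := Real.sqrt_pos.2 hq
  have ht2 : t ^ 2 = δ + r ^ 2 := Real.sq_sqrt hq.le
  have h1 : HasDerivAt (fun r : ℝ => δ + r ^ 2) (2 * r) r := by
    simpa using ((hasDerivAt_pow 2 r).const_add δ)
  have h2 : HasDerivAt (fun r : ℝ => Real.sqrt (δ + r ^ 2))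
      (1 / (2 * t) * (2 * r)) r :=
    (Real.hasDerivAt_sqrt hq.ne').comp r h1
  have h3 : HasDerivAt (fun r : ℝ => r / Real.sqrt (δ + r ^ 2))
      ((1 * t - r * (1 / (2 * t) * (2 * r))) / t ^ 2) r :=
    (hasDerivAt_id r).div h2 hs.ne'
  convert h3 using 1
  · rfl
  have hnum : 1 * t - r * (1 / (2 * t) * (2 * r)) = δ / t := by
    field_simp
    nlinarith [ht2]
  rw [sApp', hnum, div_div, ← ht]
  ring_nf
lemma sApp_abs_le (δ : ℝ) (hδ : 0 < δ) (r : ℝ) : |sApp δ r| ≤ 1 := by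
  have hq : 0 < δ + r ^ 2 := by positivity
  have hs : 0 < Real.sqrt (δ + r ^ 2) := Real.sqrt_pos.2 hq
  rw [sApp, abs_div, abs_of_pos hs, div_le_one hs]
  have : |r| = Real.sqrt (r ^ 2) := (Real.sqrt_sq_eq_abs r).symm
  rw [this]
  exact Real.sqrt_le_sqrt (by linarith)

lemma sApp'_nonneg (δ : ℝ) (hδ : 0 < δ) (r : ℝ) : 0 ≤ sApp' δ r := by
  have hq : 0 < δ + r ^ 2 := by positivity
  have hs : 0 < Real.sqrt (δ + r ^ 2) := Real.sqrt_pos.2 hq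
  exact div_nonneg hδ.le (pow_nonneg hs.le 3)

lemma sApp'_le (δ : ℝ) (hδ : 0 < δ) (r : ℝ) : sApp' δ r ≤ δ / (Real.sqrt δ) ^ 3 := by
  have hq : 0 < δ + r ^ 2 := by positivity
  have hs : 0 < Real.sqrt (δ + r ^ 2) := Real.sqrt_pos.2 hq
  have hsd : 0 < Real.sqrt δ := Real.sqrt_pos.2 hδ
  apply div_le_div_of_nonneg_left hδ.le (by positivity)
  have h1 : Real.sqrt δ ≤ Real.sqrt (δ + r ^ 2) := Real.sqrt_le_sqrt (by nlinarith [sq_nonneg r])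
  exact pow_le_pow_left₀ hsd.le h1 3

lemma sApp_tendsto_sign (r : ℝ) :
    Filter.Tendsto (fun m : ℕ => sApp (1 / (m + 1)) r) Filter.atTop (nhds (Real.sign r)) := by
  have hδ : Filter.Tendsto (fun m : ℕ => (1 : ℝ) / (m + 1)) Filter.atTop (nhds 0) :=
    tendsto_one_div_add_atTop_nhds_zero_nat
  rcases eq_or_ne r 0 with rfl|hr
  · simpa [sApp] using tendsto_const_nhds
  · have hcont : Filter.Tendsto (fun d : ℝ => r / Real.sqrt (d + r ^ 2)) (nhds 0)
        (nhds (r / Real.sqrt (0 + r ^ 2))) := by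
      apply Filter.Tendsto.div tendsto_const_nhds
      · exact (Real.continuous_sqrt.tendsto _).comp (by
          simpa using (continuous_add_right (r ^ 2)).tendsto (0:ℝ))
      · positivity
    have : r / Real.sqrt (0 + r ^ 2) = Real.sign r := by
      rw [zero_add, Real.sqrt_sq_eq_abs]
      rcases lt_trichotomy r 0 with h|h|h
      · rw [Real.sign_of_neg h, abs_of_neg h]; field_simp
      · exact absurd h hr
      · rw [Real.sign_of_pos h, abs_of_pos h]; field_simp
    rw [this] at hcont
    exact hcont.comp hδ


lemma st5_lip (φ : ℝ → ℝ → ℝ) (hC1 : ContDiff ℝ 1 fun q : ℝ × ℝ => φ q.1 q.2)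
    (K : ℝ) (hK : ∀ q : ℝ × ℝ, ‖fderiv ℝ (fun q : ℝ × ℝ => φ q.1 q.2) q‖ ≤ K)
    (a b a' b' : ℝ) : |φ a b - φ a' b'| ≤ (max K 0) * (|a - a'| + |b - b'|) := by
  have key : ‖φ a b - φ a' b'‖ ≤ (max K 0) * ‖((a,b) : ℝ × ℝ) - (a',b')‖ := by
    have := Convex.norm_image_sub_le_of_norm_fderiv_le (𝕜 := ℝ) (s := Set.univ)
      (f := fun q : ℝ × ℝ => φ q.1 q.2) (C := max K 0)
      (fun x _ => (hC1.differentiable one_ne_zero).differentiableAt)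
      (fun x _ => le_trans (hK x) (le_max_left _ _)) convex_univ (Set.mem_univ ((a',b') : ℝ × ℝ))
      (Set.mem_univ ((a,b) : ℝ × ℝ))
    simpa using this
  rw [Real.norm_eq_abs] at key
  refine key.trans ?_
  apply mul_le_mul_of_nonneg_left _ (le_max_right K 0)
  rw [Prod.norm_def]
  simp only [Prod.fst_sub, Prod.snd_sub, Real.norm_eq_abs]
  exact max_le (by linarith [abs_nonneg (b - b')]) (by linarith [abs_nonneg (a - a')])

section
variable {n : ℕ}
local notation "E" => EuclideanSpace ℝ (Fin n)


lemma st5_trans (u : E → ℝ) (hu : ContDiff ℝ 1 u) (huL1 : Integrable u)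
    (hg : Integrable fun x => ‖fderiv ℝ u x‖) (v : E) :
    ∫ x, |u (x + v) - u x| ≤ (∫ x, ‖fderiv ℝ u x‖) * ‖v‖ := by
  set C := ∫ x, ‖fderiv ℝ u x‖ with hC
  have hfc : Continuous fun x : E => fderiv ℝ u x := hu.continuous_fderiv one_ne_zero
  have hucont : Continuous u := hu.continuous
  set ν : Measure ℝ := volume.restrict (Set.Ioc (0:ℝ) 1) with hν
  have hline : ∀ (x : E) (t : ℝ), HasDerivAt (fun s : ℝ => x + s • v) v t := by
    intro x t
    simpa using ((hasDerivAt_id t).smul_const v).const_add x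
  have hγ : ∀ (x : E) (t : ℝ), HasDerivAt (fun s : ℝ => u (x + s • v)) (fderiv ℝ u (x + t • v) v) t := by
    intro x t
    exact ((hu.differentiable one_ne_zero (x + t • v)).hasFDerivAt).comp_hasDerivAt t (hline x t)
  have hHcont : Continuous fun p : E × ℝ => ‖fderiv ℝ u (p.1 + p.2 • v)‖ := by
    apply Continuous.norm
    exact hfc.comp (continuous_fst.add (continuous_snd.smul continuous_const))
  -- pointwise bound
  have hpt : ∀ x : E, |u (x + v) - u x| ≤ (∫ t in (0:ℝ)..1, ‖fderiv ℝ u (x + t • v)‖) * ‖v‖ := by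
    intro x
    have hint : IntervalIntegrable (fun t : ℝ => fderiv ℝ u (x + t • v) v) volume 0 1 := by
      apply Continuous.intervalIntegrable
      exact (hfc.comp (continuous_const.add (continuous_id.smul continuous_const))).clm_apply continuous_const
    have hftc : ∫ t in (0:ℝ)..1, fderiv ℝ u (x + t • v) v = u (x + v) - u x := by
      have := intervalIntegral.integral_eq_sub_of_hasDerivAt (f := fun s : ℝ => u (x + s • v))
        (f' := fun t : ℝ => fderiv ℝ u (x + t • v) v) (a := 0) (b := 1)
        (fun t _ => hγ x t) hint
      simpa using this
    rw [← hftc]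
    calc |∫ t in (0:ℝ)..1, fderiv ℝ u (x + t • v) v|
        ≤ ∫ t in (0:ℝ)..1, ‖fderiv ℝ u (x + t • v) v‖ := by
          simpa [Real.norm_eq_abs] using
            intervalIntegral.norm_integral_le_integral_norm (f := fun t : ℝ => fderiv ℝ u (x + t • v) v) zero_le_one
    _ ≤ ∫ t in (0:ℝ)..1, ‖fderiv ℝ u (x + t • v)‖ * ‖v‖ := by
          apply intervalIntegral.integral_mono_on zero_le_one
          · apply Continuous.intervalIntegrable
            exact ((hfc.comp (continuous_const.add (continuous_id.smul continuous_const))).clm_apply continuous_const).norm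
          · apply Continuous.intervalIntegrable
            exact ((hfc.comp (continuous_const.add (continuous_id.smul continuous_const))).norm).mul continuous_const
          · intro t _
            exact ContinuousLinearMap.le_opNorm _ v
    _ = (∫ t in (0:ℝ)..1, ‖fderiv ℝ u (x + t • v)‖) * ‖v‖ := by
          rw [intervalIntegral.integral_mul_const]
  -- integrability of H on product
  have hHint : Integrable (fun p : E × ℝ => ‖fderiv ℝ u (p.1 + p.2 • v)‖) (volume.prod ν) := by
    rw [integrable_prod_iff']
    constructor
    · apply Filter.Eventually.of_forall
      intro t
      exact hg.comp_add_right (t • v)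
    · have hconst : (fun t : ℝ => ∫ x : E, ‖‖fderiv ℝ u (x + t • v)‖‖) = fun _ : ℝ => C := by
        funext t
        simp only [norm_norm]
        exact integral_add_right_eq_self (fun x => ‖fderiv ℝ u x‖) (t • v)
      rw [hconst]
      exact integrable_const C
    · exact hHcont.aestronglyMeasurable
  -- swap and compute
  have hswap : ∫ x : E, ∫ t, ‖fderiv ℝ u (x + t • v)‖ ∂ν = ∫ t, (∫ x : E, ‖fderiv ℝ u (x + t • v)‖) ∂ν := by
    exact integral_integral_swap (f := fun (x : E) (t : ℝ) => ‖fderiv ℝ u (x + t • v)‖) hHint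
  have hval : ∫ t, (∫ x : E, ‖fderiv ℝ u (x + t • v)‖) ∂ν = C := by
    have hconst : (fun t : ℝ => ∫ x : E, ‖fderiv ℝ u (x + t • v)‖) = fun _ : ℝ => C := by
      funext t
      exact integral_add_right_eq_self (fun x => ‖fderiv ℝ u x‖) (t • v)
    rw [hconst, integral_const]
    simp [hν]
  have hGint : Integrable (fun x : E => ∫ t, ‖fderiv ℝ u (x + t • v)‖ ∂ν) volume :=
    hHint.integral_prod_left
  have hdint : Integrable (fun x : E => |u (x + v) - u x|) volume := by
    apply Integrable.abs
    exact (huL1.comp_add_right v).sub huL1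
  have hivl : ∀ x : E, (∫ t in (0:ℝ)..1, ‖fderiv ℝ u (x + t • v)‖) = ∫ t, ‖fderiv ℝ u (x + t • v)‖ ∂ν := by
    intro x
    rw [intervalIntegral.integral_of_le zero_le_one]
  calc ∫ x, |u (x + v) - u x|
      ≤ ∫ x : E, (∫ t, ‖fderiv ℝ u (x + t • v)‖ ∂ν) * ‖v‖ := by
        apply integral_mono hdint (hGint.mul_const _)
        intro x
        have h := hpt x
        rw [hivl x] at h
        exact h
  _ = (∫ x : E, ∫ t, ‖fderiv ℝ u (x + t • v)‖ ∂ν) * ‖v‖ := by rw [integral_mul_const]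
  _ = C * ‖v‖ := by rw [hswap, hval]



set_option maxHeartbeats 2000000 in
lemma st5_lap_nonpos (u : E → ℝ) (hu : ContDiff ℝ 2 u)
    (hgradL1 : Integrable fun x => ‖fderiv ℝ u x‖)
    (L : E → ℝ)
    (hLdef : ∀ x, L x = ∑ j : Fin n,
      fderiv ℝ (fun y => fderiv ℝ u y (EuclideanSpace.single j 1)) x (EuclideanSpace.single j 1))
    (hlapL1 : Integrable L) :
    ∫ x, Real.sign (u x) * L x ≤ 0 := by
  classical
  set e : Fin n → E := fun j => EuclideanSpace.single j 1 with he
  set w : Fin n → E → ℝ := fun j y => fderiv ℝ u y (e j) with hw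
  have hudiff : Differentiable ℝ u := hu.differentiable (by norm_num)
  have hucont : Continuous u := hu.continuous
  have hfc : Continuous fun x : E => fderiv ℝ u x := hu.continuous_fderiv (by norm_num)
  have hwC1 : ∀ j, ContDiff ℝ 1 (w j) := fun j =>
    (hu.fderiv_right (by norm_num)).clm_apply contDiff_const
  have hwcont : ∀ j, Continuous (w j) := fun j => (hwC1 j).continuous
  have hw'cont : ∀ j, Continuous fun x => fderiv ℝ (w j) x :=
    fun j => (hwC1 j).continuous_fderiv one_ne_zero
  have hwbd : ∀ j x, |w j x| ≤ ‖fderiv ℝ u x‖ := by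
    intro j x
    calc |w j x| = ‖fderiv ℝ u x (e j)‖ := rfl
    _ ≤ ‖fderiv ℝ u x‖ * ‖e j‖ := ContinuousLinearMap.le_opNorm _ _
    _ = ‖fderiv ℝ u x‖ := by rw [he]; simp [EuclideanSpace.norm_single]
  have hLeq : L = fun x => ∑ j : Fin n, fderiv ℝ (w j) x (e j) := funext fun x => hLdef x
  have hLcont : Continuous L := by
    rw [hLeq]
    exact continuous_finset_sum _ fun j _ => (hw'cont j).clm_apply continuous_const
  -- bump function
  set c : ContDiffBump (0 : E) := ⟨1, 2, one_pos, one_lt_two⟩ with hc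
  have hccont : Continuous (⇑c) := c.continuous
  have hcCS : HasCompactSupport (⇑c) := by
    rw [HasCompactSupport, c.tsupport_eq]
    exact isCompact_closedBall _ _
  have hcfderiv_cont : Continuous fun y : E => fderiv ℝ (⇑c) y :=
    (c.contDiff (n := 1)).continuous_fderiv one_ne_zero
  obtain ⟨C₀, hC₀⟩ := (hcCS.fderiv ℝ).exists_bound_of_continuous hcfderiv_cont
  have hcdiff : Differentiable ℝ (⇑c) := (c.contDiff (n := 1)).differentiable one_ne_zero
  set C := ∫ x : E, ‖fderiv ℝ u x‖ with hCdef
  have hC₀0 : 0 ≤ C₀ := le_trans (norm_nonneg _) (hC₀ 0)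
  -- Step 1: for each δ > 0
  have key1 : ∀ δ : ℝ, 0 < δ → ∫ x, sApp δ (u x) * L x ≤ 0 := by
    intro δ hδ
    have hscont : Continuous (sApp δ) := by
      apply Continuous.div continuous_id
      · exact Real.continuous_sqrt.comp (continuous_const.add (continuous_pow 2))
      · intro r
        have : (0:ℝ) < δ + r ^ 2 := by positivity
        exact (Real.sqrt_pos.2 this).ne'
    have hs'cont : Continuous (sApp' δ) := by
      apply Continuous.div continuous_const
      · exact (Real.continuous_sqrt.comp (continuous_const.add (continuous_pow 2))).pow 3
      · intro r
        have : (0:ℝ) < δ + r ^ 2 := by positivity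
        exact (pow_pos (Real.sqrt_pos.2 this) 3).ne'
    have hsu : ∀ x : E, HasFDerivAt (fun y => sApp δ (u y)) (sApp' δ (u x) • fderiv ℝ u x) x := by
      intro x
      have := (sApp_hasDerivAt δ hδ (u x)).comp_hasFDerivAt x (hudiff x).hasFDerivAt
      exact this
    have keyR : ∀ R : ℝ, 0 < R →
        ∫ x, c (R⁻¹ • x) * sApp δ (u x) * L x ≤ C₀ * R⁻¹ * (n * C) := by
      intro R hR
      set χ : E → ℝ := fun x => c (R⁻¹ • x) with hχ
      set Dχ : E → E →L[ℝ] ℝ := fun x =>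
        (fderiv ℝ (⇑c) (R⁻¹ • x)).comp (R⁻¹ • ContinuousLinearMap.id ℝ E) with hDχ
      have hχfd : ∀ x : E, HasFDerivAt χ (Dχ x) x := by
        intro x
        have h1 : HasFDerivAt (fun y : E => R⁻¹ • y) (R⁻¹ • ContinuousLinearMap.id ℝ E) x :=
          (hasFDerivAt_id x).const_smul R⁻¹
        exact ((hcdiff (R⁻¹ • x)).hasFDerivAt).comp x h1
      have hχcont : Continuous χ := hccont.comp (continuous_const_smul _)
      have hDχcont : Continuous Dχ :=
        (hcfderiv_cont.comp (continuous_const_smul _)).clm_comp continuous_const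
      have hDχnorm : ∀ x, ‖Dχ x‖ ≤ C₀ * R⁻¹ := by
        intro x
        refine le_trans (ContinuousLinearMap.opNorm_comp_le _ _) ?_
        have hidle : ‖ContinuousLinearMap.id ℝ (EuclideanSpace ℝ (Fin n))‖ ≤ 1 :=
          ContinuousLinearMap.norm_id_le
        have h4 := norm_smul (R⁻¹) (ContinuousLinearMap.id ℝ (EuclideanSpace ℝ (Fin n)))
        have h2 : ‖R⁻¹ • ContinuousLinearMap.id ℝ (EuclideanSpace ℝ (Fin n))‖ ≤ R⁻¹ := by
          rw [h4, Real.norm_eq_abs, abs_of_pos (inv_pos.2 hR)]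
          nlinarith [inv_pos.2 hR]
        exact mul_le_mul (hC₀ _) h2 (norm_nonneg _) hC₀0
      -- supports
      set K : Set E := Metric.closedBall 0 (2 * R) with hK
      have hKc : IsCompact K := isCompact_closedBall _ _
      have hrOut : c.rOut = (2:ℝ) := rfl
      have hχ0 : ∀ x ∉ K, χ x = 0 := by
        intro x hx
        apply c.zero_of_le_dist
        simp only [hK, Metric.mem_closedBall, not_le, dist_zero_right] at hx
        have hd : dist (R⁻¹ • x) 0 = R⁻¹ * ‖x‖ := by
          rw [dist_zero_right, norm_smul, Real.norm_eq_abs, abs_of_pos (inv_pos.2 hR)]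
        rw [hd, hrOut]
        rw [← mul_le_mul_iff_right₀ hR, ← mul_assoc, mul_inv_cancel₀ hR.ne', one_mul]
        linarith
      have hDχ0 : ∀ x ∉ K, Dχ x = 0 := by
        intro x hx
        have h1 : fderiv ℝ (⇑c) (R⁻¹ • x) = 0 := by
          by_contra hne
          have hmem : R⁻¹ • x ∈ tsupport (⇑c) := support_fderiv_subset ℝ (by exact hne)
          rw [c.tsupport_eq] at hmem
          simp only [Metric.mem_closedBall, dist_zero_right] at hmem
          rw [norm_smul, Real.norm_eq_abs, abs_of_pos (inv_pos.2 hR)] at hmem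
          simp only [hK, Metric.mem_closedBall, not_le, dist_zero_right] at hx
          have : ‖x‖ ≤ 2 * R := by
            nlinarith [mul_le_mul_of_nonneg_left hmem hR.le, mul_inv_cancel₀ hR.ne']
          linarith
        rw [hDχ]
        simp only [h1]
        ext y
        simp
      -- the function f and its derivative
      set f : E → ℝ := fun x => χ x * sApp δ (u x) with hf
      set Φ : E → E →L[ℝ] ℝ := fun x =>
        χ x • (sApp' δ (u x) • fderiv ℝ u x) + sApp δ (u x) • Dχ x with hΦ
      have hffd : ∀ x, HasFDerivAt f (Φ x) x := fun x => (hχfd x).mul (hsu x)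
      have hfdiff : Differentiable ℝ f := fun x => (hffd x).differentiableAt
      have hfderiv : ∀ x, fderiv ℝ f x = Φ x := fun x => (hffd x).fderiv
      have hfcont : Continuous f := hχcont.mul (hscont.comp hucont)
      have hΦcont : Continuous Φ :=
        (hχcont.smul ((hs'cont.comp hucont).smul hfc)).add ((hscont.comp hucont).smul hDχcont)
      have hf0 : ∀ x ∉ K, f x = 0 := by
        intro x hx
        rw [hf]
        simp only [hχ0 x hx, zero_mul]
      have hΦ0 : ∀ x ∉ K, Φ x = 0 := by
        intro x hx
        rw [hΦ]
        simp only [hχ0 x hx, hDχ0 x hx, zero_smul, smul_zero, add_zero]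
      -- integrability
      have I2 : ∀ j, Integrable fun x => f x * fderiv ℝ (w j) x (e j) := by
        intro j
        apply Continuous.integrable_of_hasCompactSupport
          (hfcont.mul ((hw'cont j).clm_apply continuous_const))
        exact HasCompactSupport.intro hKc (fun x hx => by simp only [Pi.mul_apply]; rw [hf0 x hx, zero_mul])
      have I1 : ∀ j, Integrable fun x => Φ x (e j) * w j x := by
        intro j
        apply Continuous.integrable_of_hasCompactSupport
          ((hΦcont.clm_apply continuous_const).mul (hwcont j))
        exact HasCompactSupport.intro hKc (fun x hx => by simp only [Pi.mul_apply]; rw [hΦ0 x hx]; simp)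
      have I3 : ∀ j, Integrable fun x => f x * w j x := by
        intro j
        apply Continuous.integrable_of_hasCompactSupport (hfcont.mul (hwcont j))
        exact HasCompactSupport.intro hKc (fun x hx => by simp only [Pi.mul_apply]; rw [hf0 x hx, zero_mul])
      -- IBP per coordinate
      have hIBP : ∀ j, ∫ x, f x * fderiv ℝ (w j) x (e j) = -∫ x, Φ x (e j) * w j x := by
        intro j
        have hrw : (fun x => fderiv ℝ f x (e j) * w j x) = fun x => Φ x (e j) * w j x := by
          funext x; rw [hfderiv x]
        have := integral_mul_fderiv_eq_neg_fderiv_mul_of_integrable (μ := volume)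
          (f := f) (g := w j) (v := e j) (by rw [hrw]; exact I1 j) (I2 j) (I3 j)
          (fun x _ => hfdiff x) (fun x _ => (hwC1 j).differentiable one_ne_zero x)
        rw [hrw] at this
        exact this
      -- sum over j
      have hsplit : ∫ x, f x * L x = ∑ j : Fin n, ∫ x, f x * fderiv ℝ (w j) x (e j) := by
        rw [← integral_finset_sum _ (fun j _ => I2 j)]
        congr 1
        funext x
        rw [hLdef x, Finset.mul_sum]
      have hsum : ∫ x, f x * L x = -∑ j : Fin n, ∫ x, Φ x (e j) * w j x := by
        rw [hsplit, ← Finset.sum_neg_distrib]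
        exact Finset.sum_congr rfl fun j _ => hIBP j
      -- expand Φ applied
      have hΦapp : ∀ x (j : Fin n), Φ x (e j) * w j x =
          χ x * sApp' δ (u x) * (w j x * w j x) + sApp δ (u x) * (Dχ x (e j) * w j x) := by
        intro x j
        rw [hΦ]
        simp only [ContinuousLinearMap.add_apply, ContinuousLinearMap.smul_apply, smul_eq_mul]
        have : fderiv ℝ u x (e j) = w j x := rfl
        rw [this]
        ring
      have hQP : ∑ j : Fin n, ∫ x, Φ x (e j) * w j x =
          ∫ x, (χ x * sApp' δ (u x) * ∑ j : Fin n, w j x * w j x)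
            + sApp δ (u x) * ∑ j : Fin n, Dχ x (e j) * w j x := by
        rw [← integral_finset_sum _ (fun j _ => I1 j)]
        congr 1
        funext x
        rw [Finset.mul_sum, Finset.mul_sum, ← Finset.sum_add_distrib]
        exact Finset.sum_congr rfl fun j _ => hΦapp x j
      -- integrability of the two pieces
      have IQ : Integrable fun x => χ x * sApp' δ (u x) * ∑ j : Fin n, w j x * w j x := by
        apply Continuous.integrable_of_hasCompactSupport
          ((hχcont.mul (hs'cont.comp hucont)).mul
            (continuous_finset_sum _ fun j _ => (hwcont j).mul (hwcont j)))
        exact HasCompactSupport.intro hKc (fun x hx => by simp only [Pi.mul_apply]; rw [hχ0 x hx]; ring)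
      have IP : Integrable fun x => sApp δ (u x) * ∑ j : Fin n, Dχ x (e j) * w j x := by
        apply Continuous.integrable_of_hasCompactSupport
          ((hscont.comp hucont).mul
            (continuous_finset_sum _ fun j _ => (hDχcont.clm_apply continuous_const).mul (hwcont j)))
        apply HasCompactSupport.intro hKc
        intro x hx
        have : ∀ j : Fin n, Dχ x (e j) = 0 := fun j => by rw [hDχ0 x hx]; simp
        simp [this]
      -- the bound
      have hbound : ∫ x, f x * L x ≤ C₀ * R⁻¹ * (n * C) := by
        rw [hsum, hQP, integral_add IQ IP, neg_add]
        have h1 : -∫ x, χ x * sApp' δ (u x) * ∑ j : Fin n, w j x * w j x ≤ 0 := by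
          rw [neg_nonpos]
          apply integral_nonneg
          intro x
          apply mul_nonneg (mul_nonneg c.nonneg (sApp'_nonneg δ hδ _))
          exact Finset.sum_nonneg fun j _ => mul_self_nonneg _
        have h2 : -∫ x, sApp δ (u x) * ∑ j : Fin n, Dχ x (e j) * w j x ≤ C₀ * R⁻¹ * (n * C) := by
          have habs : ∀ x, |sApp δ (u x) * ∑ j : Fin n, Dχ x (e j) * w j x| ≤
              C₀ * R⁻¹ * (n * ‖fderiv ℝ u x‖) := by
            intro x
            rw [abs_mul]
            have hP : |∑ j : Fin n, Dχ x (e j) * w j x| ≤ (n : ℝ) * (C₀ * R⁻¹ * ‖fderiv ℝ u x‖) := by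
              refine le_trans (Finset.abs_sum_le_sum_abs _ _) ?_
              have : ∀ j : Fin n, |Dχ x (e j) * w j x| ≤ C₀ * R⁻¹ * ‖fderiv ℝ u x‖ := by
                intro j
                rw [abs_mul]
                apply mul_le_mul _ (hwbd j x) (abs_nonneg _)
                  (mul_nonneg hC₀0 (inv_pos.2 hR).le)
                calc |Dχ x (e j)| = ‖Dχ x (e j)‖ := rfl
                _ ≤ ‖Dχ x‖ * ‖e j‖ := ContinuousLinearMap.le_opNorm _ _
                _ = ‖Dχ x‖ := by rw [he]; simp [EuclideanSpace.norm_single]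
                _ ≤ C₀ * R⁻¹ := hDχnorm x
              refine le_trans (Finset.sum_le_sum fun j _ => this j) ?_
              rw [Finset.sum_const, Finset.card_univ, Fintype.card_fin]
              simp [nsmul_eq_mul]
            calc |sApp δ (u x)| * |∑ j : Fin n, Dχ x (e j) * w j x|
                ≤ 1 * ((n : ℝ) * (C₀ * R⁻¹ * ‖fderiv ℝ u x‖)) := by
                  apply mul_le_mul (sApp_abs_le δ hδ _) hP (abs_nonneg _) zero_le_one
            _ = C₀ * R⁻¹ * (n * ‖fderiv ℝ u x‖) := by ring
          calc -∫ x, sApp δ (u x) * ∑ j : Fin n, Dχ x (e j) * w j x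
              ≤ |∫ x, sApp δ (u x) * ∑ j : Fin n, Dχ x (e j) * w j x| := neg_le_abs _
          _ ≤ ∫ x, |sApp δ (u x) * ∑ j : Fin n, Dχ x (e j) * w j x| := by
              have h := norm_integral_le_integral_norm (μ := (volume : Measure (EuclideanSpace ℝ (Fin n))))
                (fun x => sApp δ (u x) * ∑ j : Fin n, Dχ x (e j) * w j x)
              simpa only [Real.norm_eq_abs] using h
          _ ≤ ∫ x, C₀ * R⁻¹ * (n * ‖fderiv ℝ u x‖) := by
              apply integral_mono IP.abs _ habs
              exact ((hgradL1.const_mul _).const_mul _)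
          _ = C₀ * R⁻¹ * (n * C) := by
              rw [integral_const_mul, integral_const_mul]
        linarith
      calc ∫ x, c (R⁻¹ • x) * sApp δ (u x) * L x = ∫ x, f x * L x := by
            congr 1
      _ ≤ C₀ * R⁻¹ * (n * C) := hbound
    -- limit R → ∞
    have hma : Tendsto (fun m : ℕ => ∫ x, c ((((m:ℝ)+1))⁻¹ • x) * sApp δ (u x) * L x)
        atTop (nhds (∫ x, sApp δ (u x) * L x)) := by
      apply tendsto_integral_of_dominated_convergence (bound := fun x => |L x|)
      · intro m
        apply Continuous.aestronglyMeasurable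
        exact ((hccont.comp (continuous_const_smul _)).mul
          (hscont.comp hucont)).mul hLcont
      · exact hlapL1.abs
      · intro m
        apply Filter.Eventually.of_forall
        intro x
        rw [Real.norm_eq_abs, abs_mul, abs_mul]
        have h1 : |c (((m:ℝ)+1)⁻¹ • x)| ≤ 1 := by
          rw [abs_of_nonneg c.nonneg]; exact c.le_one
        have h2 : |sApp δ (u x)| ≤ 1 := sApp_abs_le δ hδ _
        have h3 : |c (((m:ℝ)+1)⁻¹ • x)| * |sApp δ (u x)| ≤ 1 := by
          nlinarith [abs_nonneg (sApp δ (u x)), abs_nonneg (c (((m:ℝ)+1)⁻¹ • x))]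
        nlinarith [mul_le_mul_of_nonneg_right h3 (abs_nonneg (L x))]
      · apply Filter.Eventually.of_forall
        intro x
        apply Filter.Tendsto.congr' _ tendsto_const_nhds
        filter_upwards [Filter.eventually_ge_atTop ⌈‖x‖⌉₊] with m hm
        have h1 : c (((m:ℝ)+1)⁻¹ • x) = 1 := by
          apply c.one_of_mem_closedBall
          have hle : dist (((m:ℝ)+1)⁻¹ • x) 0 ≤ (1:ℝ) := by
            rw [dist_zero_right, norm_smul, Real.norm_eq_abs,
              abs_of_pos (by positivity : (0:ℝ) < ((m:ℝ)+1)⁻¹),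
              inv_mul_le_iff₀ (by positivity), mul_one]
            calc ‖x‖ ≤ ⌈‖x‖⌉₊ := Nat.le_ceil _
            _ ≤ (m : ℝ) := by exact_mod_cast hm
            _ ≤ (m : ℝ) + 1 := by linarith
          exact Metric.mem_closedBall.2 hle
        rw [h1, one_mul]
    have hmb : Tendsto (fun m : ℕ => C₀ * ((m:ℝ)+1)⁻¹ * (n * C)) atTop (nhds 0) := by
      have h0 : Tendsto (fun m : ℕ => ((m:ℝ)+1)⁻¹) atTop (nhds 0) := by
        simpa [one_div] using tendsto_one_div_add_atTop_nhds_zero_nat (𝕜 := ℝ)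
      have := (h0.const_mul C₀).mul_const ((n : ℝ) * C)
      simpa using this
    exact le_of_tendsto_of_tendsto' hma hmb (fun m => keyR _ (by positivity))
  -- limit δ → 0
  have hT : Tendsto (fun m : ℕ => ∫ x, sApp (1/((m:ℝ)+1)) (u x) * L x) atTop
      (nhds (∫ x, Real.sign (u x) * L x)) := by
    apply tendsto_integral_of_dominated_convergence (bound := fun x => |L x|)
    · intro m
      apply Continuous.aestronglyMeasurable
      have hδ : (0:ℝ) < 1/((m:ℝ)+1) := by positivity
      have hscont : Continuous (sApp (1/((m:ℝ)+1))) := by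
        apply Continuous.div continuous_id
        · exact Real.continuous_sqrt.comp (continuous_const.add (continuous_pow 2))
        · intro r
          have : (0:ℝ) < 1/((m:ℝ)+1) + r ^ 2 := by positivity
          exact (Real.sqrt_pos.2 this).ne'
      exact (hscont.comp hucont).mul hLcont
    · exact hlapL1.abs
    · intro m
      apply Filter.Eventually.of_forall
      intro x
      rw [Real.norm_eq_abs, abs_mul]
      calc |sApp (1/((m:ℝ)+1)) (u x)| * |L x| ≤ 1 * |L x| :=
            mul_le_mul (sApp_abs_le _ (by positivity) _) le_rfl (abs_nonneg _) zero_le_one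
      _ = |L x| := one_mul _
    · apply Filter.Eventually.of_forall
      intro x
      exact (sApp_tendsto_sign (u x)).mul_const (L x)
  exact le_of_tendsto hT (Filter.Eventually.of_forall fun m => key1 _ (by positivity))



lemma st5_nonlocal {k : ℕ} (β : Fin k → E → E) (hβcont : ∀ i, Continuous (β i))
    (F : Fin k → E → ℝ) (hFint : ∀ i, Integrable (F i)) (hFnn : ∀ i h, 0 ≤ F i h)
    (φ : Fin k → ℝ → ℝ → ℝ)
    (hφmono : ∀ i b, Monotone fun a => φ i a b)
    (hφanti : ∀ i a, Antitone fun b => φ i a b)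
    (hφ0 : ∀ i, φ i 0 0 = 0)
    (hφC1 : ∀ i, ContDiff ℝ 1 fun q : ℝ × ℝ => φ i q.1 q.2)
    (hφbdd : ∀ i, ∃ K, ∀ q : ℝ × ℝ, ‖fderiv ℝ (fun q : ℝ × ℝ => φ i q.1 q.2) q‖ ≤ K)
    (u : E → ℝ) (hu : ContDiff ℝ 2 u) (huL1 : Integrable u)
    (hgradL1 : Integrable fun x => ‖fderiv ℝ u x‖)
    (G : E → ℝ)
    (hG : ∀ x, G x = ∫ h, ∑ i : Fin k,
      (φ i (u x) (u (x + β i h)) - φ i (u (x - β i h)) (u x)) / ‖β i h‖ * F i h) :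
    Integrable (fun x => Real.sign (u x) * G x) ∧
      0 ≤ ∫ x, Real.sign (u x) * G x := by
  classical
  have hucont : Continuous u := hu.continuous
  have humeas : Measurable u := hucont.measurable
  set S : E → ℝ := fun x => Real.sign (u x) with hS
  have hSmeas : Measurable S := st5_sign_meas.comp humeas
  have hSabs : ∀ x, |S x| ≤ 1 := fun x => st5_sign_abs_le (u x)
  -- Lipschitz constants
  choose K₀ hK₀ using hφbdd
  set K : Fin k → ℝ := fun i => max (K₀ i) 0 with hKdef
  have hKnn : ∀ i, 0 ≤ K i := fun i => le_max_right _ _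
  have hlip : ∀ i a b a' b', |φ i a b - φ i a' b'| ≤ K i * (|a - a'| + |b - b'|) :=
    fun i => st5_lip (φ i) (hφC1 i) (K₀ i) (hK₀ i)
  have hφabs : ∀ i a b, |φ i a b| ≤ K i * (|a| + |b|) := by
    intro i a b
    have := hlip i a b 0 0
    simpa [hφ0 i] using this
  have hφcont : ∀ i, Continuous fun q : ℝ × ℝ => φ i q.1 q.2 := fun i => (hφC1 i).continuous
  set C := ∫ x : E, ‖fderiv ℝ u x‖ with hCdef
  have hCnn : 0 ≤ C := integral_nonneg fun x => norm_nonneg _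
  -- the component functions on the product space
  set T : Fin k → E × E → ℝ := fun i p =>
    S p.1 * ((φ i (u p.1) (u (p.1 + β i p.2)) - φ i (u (p.1 - β i p.2)) (u p.1)) / ‖β i p.2‖
      * F i p.2) with hT
  set Ψ : E × E → ℝ := fun p => ∑ i : Fin k, T i p with hΨdef
  -- translation bound in ENNReal form
  have htransE : ∀ v : E, ∫⁻ x : E, ENNReal.ofReal |u (x + v) - u x| ∂volume
      ≤ ENNReal.ofReal (C * ‖v‖) := by
    intro v
    have hdint : Integrable (fun x : E => |u (x + v) - u x|) volume :=
      ((huL1.comp_add_right v).sub huL1).abs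
    have h1 : ENNReal.ofReal (∫ x : E, |u (x + v) - u x|)
        = ∫⁻ x : E, ENNReal.ofReal |u (x + v) - u x| ∂volume :=
      ofReal_integral_eq_lintegral_ofReal hdint
        (Filter.Eventually.of_forall fun x => abs_nonneg _)
    rw [← h1]
    apply ENNReal.ofReal_le_ofReal
    exact st5_trans u (hu.of_le (by norm_num)) huL1 hgradL1 v
  -- measurability of each T i on the product
  have hNumCont : ∀ i, Continuous fun p : E × E =>
      φ i (u p.1) (u (p.1 + β i p.2)) - φ i (u (p.1 - β i p.2)) (u p.1) := by
    intro i
    apply Continuous.sub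
    · exact (hφcont i).comp ((hucont.comp continuous_fst).prodMk
        (hucont.comp (continuous_fst.add ((hβcont i).comp continuous_snd))))
    · exact (hφcont i).comp ((hucont.comp
        (continuous_fst.sub ((hβcont i).comp continuous_snd))).prodMk
        (hucont.comp continuous_fst))
  have hTmeas : ∀ i, AEStronglyMeasurable (T i) (volume.prod volume) := by
    intro i
    have h1 : Measurable fun p : E × E =>
        S p.1 * ((φ i (u p.1) (u (p.1 + β i p.2)) - φ i (u (p.1 - β i p.2)) (u p.1))
          / ‖β i p.2‖) := by
      apply Measurable.mul (hSmeas.comp measurable_fst)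
      exact (hNumCont i).measurable.div (((hβcont i).comp continuous_snd).norm.measurable)
    have h2 : (T i) = fun p : E × E =>
        (S p.1 * ((φ i (u p.1) (u (p.1 + β i p.2)) - φ i (u (p.1 - β i p.2)) (u p.1))
          / ‖β i p.2‖)) * F i p.2 := by
      funext p; rw [hT]; ring
    rw [h2]
    exact h1.aestronglyMeasurable.mul (hFint i).1.comp_snd
  -- integrability of each T i on the product
  have hTint : ∀ i, Integrable (T i) (volume.prod volume) := by
    intro i
    refine ⟨hTmeas i, ?_⟩
    rw [hasFiniteIntegral_iff_norm]
    have hmeasAE : AEMeasurable (fun p : E × E => ENNReal.ofReal ‖T i p‖) (volume.prod volume) :=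
      ((hTmeas i).norm.aemeasurable).ennreal_ofReal
    rw [lintegral_prod_symm _ hmeasAE]
    have hinner : ∀ h : E, ∫⁻ x : E, ENNReal.ofReal ‖T i (x, h)‖ ∂volume
        ≤ ENNReal.ofReal (2 * K i * C * F i h) := by
      intro h
      by_cases hv : β i h = 0
      · have hz : ∀ x : E, T i (x, h) = 0 := by
          intro x
          rw [hT]
          simp [hv]
        simp only [hz]
        simp only [norm_zero, ENNReal.ofReal_zero, lintegral_const, zero_mul]
        exact zero_le
      · have hvn : 0 < ‖β i h‖ := norm_pos_iff.2 hv
        set v : EuclideanSpace ℝ (Fin n) := β i h with hvdef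
        have hd1m : Measurable fun x : E => |u (x + v) - u x| :=
          (((hucont.comp (continuous_id.add continuous_const)).sub hucont).abs).measurable
        have hpt : ∀ x : E, ‖T i (x, h)‖ ≤
            (K i * F i h / ‖v‖) * (|u (x + v) - u x| + |u (x - v) - u x|) := by
          intro x
          have hD : |φ i (u x) (u (x + v)) - φ i (u (x - v)) (u x)| ≤
              K i * (|u (x + v) - u x| + |u (x - v) - u x|) := by
            have e1 := hlip i (u x) (u (x + v)) (u x) (u x)
            have e2 := hlip i (u x) (u x) (u (x - v)) (u x)
            have e3 := abs_sub_le (φ i (u x) (u (x + v))) (φ i (u x) (u x)) (φ i (u (x - v)) (u x))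
            have e4 : |u x - u (x - v)| = |u (x - v) - u x| := abs_sub_comm _ _
            simp only [sub_self, abs_zero, zero_add, add_zero] at e1 e2
            rw [e4] at e2
            calc |φ i (u x) (u (x + v)) - φ i (u (x - v)) (u x)| ≤
                |φ i (u x) (u (x + v)) - φ i (u x) (u x)| +
                  |φ i (u x) (u x) - φ i (u (x - v)) (u x)| := e3
            _ ≤ K i * |u (x + v) - u x| + K i * |u (x - v) - u x| := add_le_add e1 e2
            _ = K i * (|u (x + v) - u x| + |u (x - v) - u x|) := by ring
          have habs : ‖T i (x, h)‖ =
              |S x| * (|φ i (u x) (u (x + v)) - φ i (u (x - v)) (u x)| / ‖v‖ * F i h) := by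
            rw [hT]
            simp only [Real.norm_eq_abs, abs_mul, abs_div]
            rw [abs_of_nonneg (hFnn i h), abs_of_nonneg (norm_nonneg v)]
          rw [habs]
          have h5 : |φ i (u x) (u (x + v)) - φ i (u (x - v)) (u x)| / ‖v‖ * F i h ≤
              K i * (|u (x + v) - u x| + |u (x - v) - u x|) / ‖v‖ * F i h := by
            apply mul_le_mul_of_nonneg_right _ (hFnn i h)
            exact (div_le_div_iff_of_pos_right hvn).2 hD
          calc |S x| * (|φ i (u x) (u (x + v)) - φ i (u (x - v)) (u x)| / ‖v‖ * F i h)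
              ≤ 1 * (K i * (|u (x + v) - u x| + |u (x - v) - u x|) / ‖v‖ * F i h) := by
                apply mul_le_mul (hSabs x) h5 _ zero_le_one
                exact mul_nonneg (div_nonneg (abs_nonneg _) (norm_nonneg _)) (hFnn i h)
          _ = (K i * F i h / ‖v‖) * (|u (x + v) - u x| + |u (x - v) - u x|) := by ring
        have hcoef : 0 ≤ K i * F i h / ‖v‖ :=
          div_nonneg (mul_nonneg (hKnn i) (hFnn i h)) (norm_nonneg _)
        calc ∫⁻ x : E, ENNReal.ofReal ‖T i (x, h)‖ ∂volume
            ≤ ∫⁻ x : E, ENNReal.ofReal ((K i * F i h / ‖v‖) *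
                (|u (x + v) - u x| + |u (x - v) - u x|)) ∂volume := by
              apply lintegral_mono
              intro x
              exact ENNReal.ofReal_le_ofReal (hpt x)
        _ = ENNReal.ofReal (K i * F i h / ‖v‖) *
              ∫⁻ x : E, ENNReal.ofReal (|u (x + v) - u x| + |u (x - v) - u x|) ∂volume := by
              rw [← lintegral_const_mul' _ _ ENNReal.ofReal_ne_top]
              congr 1
              funext x
              rw [ENNReal.ofReal_mul hcoef]
        _ = ENNReal.ofReal (K i * F i h / ‖v‖) *
              (∫⁻ x : E, ENNReal.ofReal |u (x + v) - u x| ∂volume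
                + ∫⁻ x : E, ENNReal.ofReal |u (x - v) - u x| ∂volume) := by
              congr 1
              rw [← lintegral_add_left hd1m.ennreal_ofReal]
              congr 1
              funext x
              rw [ENNReal.ofReal_add (abs_nonneg _) (abs_nonneg _)]
        _ ≤ ENNReal.ofReal (K i * F i h / ‖v‖) *
              (ENNReal.ofReal (C * ‖v‖) + ENNReal.ofReal (C * ‖v‖)) := by
              apply mul_le_mul_right _ _
              apply add_le_add
              · exact htransE v
              · have : ∀ x : E, x - v = x + (-v) := fun x => sub_eq_add_neg x v
                simp only [this]
                have h6 := htransE (-v)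
                rw [norm_neg] at h6
                exact h6
        _ ≤ ENNReal.ofReal (2 * K i * C * F i h) := by
              rw [← ENNReal.ofReal_add (mul_nonneg hCnn (norm_nonneg _))
                (mul_nonneg hCnn (norm_nonneg _)),
                ← ENNReal.ofReal_mul hcoef]
              apply ENNReal.ofReal_le_ofReal
              apply le_of_eq
              field_simp
              ring
    calc ∫⁻ h : E, ∫⁻ x : E, ENNReal.ofReal ‖T i (x, h)‖ ∂volume ∂volume
        ≤ ∫⁻ h : E, ENNReal.ofReal (2 * K i * C * F i h) ∂volume := lintegral_mono hinner
    _ = ENNReal.ofReal (∫ h : E, 2 * K i * C * F i h) := by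
        rw [ofReal_integral_eq_lintegral_ofReal ((hFint i).const_mul (2 * K i * C))
          (Filter.Eventually.of_forall fun h => mul_nonneg
            (mul_nonneg (mul_nonneg (by norm_num) (hKnn i)) hCnn) (hFnn i h))]
    _ < ⊤ := ENNReal.ofReal_lt_top
  -- x-integrability for every fixed h
  have hxmeas : ∀ (i : Fin k) (h : E), AEStronglyMeasurable (fun x => T i (x, h)) volume := by
    intro i h
    have hc1 : Continuous fun x : E => φ i (u x) (u (x + β i h)) :=
      (hφcont i).comp (hucont.prodMk (hucont.comp (continuous_id.add continuous_const)))
    have hc2 : Continuous fun x : E => φ i (u (x - β i h)) (u x) :=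
      (hφcont i).comp ((hucont.comp (continuous_id.sub continuous_const)).prodMk hucont)
    have hm : Measurable fun x : E => S x *
        ((φ i (u x) (u (x + β i h)) - φ i (u (x - β i h)) (u x)) / ‖β i h‖ * F i h) :=
      hSmeas.mul ((((hc1.sub hc2).measurable).div
        (measurable_const : Measurable fun _ : E => ‖β i h‖)).mul
        (measurable_const : Measurable fun _ : E => F i h))
    exact hm.aestronglyMeasurable
  -- integrable dominating functions
  have hPhiInt1 : ∀ (i : Fin k) (v : EuclideanSpace ℝ (Fin n)),
      Integrable (fun x : E => K i * (|u x| + |u (x + v)|)) volume :=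
    fun i v => ((huL1.abs.add (huL1.comp_add_right v).abs).const_mul (K i))
  have hSφ1 : ∀ (i : Fin k) (v : EuclideanSpace ℝ (Fin n)),
      Integrable (fun x : E => S x * φ i (u x) (u (x + v))) volume := by
    intro i v
    apply Integrable.mono' (hPhiInt1 i v)
    · have hc1 : Continuous fun x : E => φ i (u x) (u (x + v)) :=
        (hφcont i).comp (hucont.prodMk (hucont.comp (continuous_id.add continuous_const)))
      exact (hSmeas.mul hc1.measurable).aestronglyMeasurable
    · apply Filter.Eventually.of_forall
      intro x
      rw [Real.norm_eq_abs, abs_mul]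
      calc |S x| * |φ i (u x) (u (x + v))| ≤ 1 * (K i * (|u x| + |u (x + v)|)) := by
            apply mul_le_mul (hSabs x) (hφabs i _ _) (abs_nonneg _) zero_le_one
      _ = K i * (|u x| + |u (x + v)|) := one_mul _
  have hSφ1' : ∀ (i : Fin k) (v : EuclideanSpace ℝ (Fin n)),
      Integrable (fun x : E => Real.sign (u (x + v)) * φ i (u x) (u (x + v))) volume := by
    intro i v
    apply Integrable.mono' (hPhiInt1 i v)
    · have hc1 : Continuous fun x : E => φ i (u x) (u (x + v)) :=
        (hφcont i).comp (hucont.prodMk (hucont.comp (continuous_id.add continuous_const)))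
      exact ((st5_sign_meas.comp (humeas.comp
        (measurable_id.add_const v))).mul hc1.measurable).aestronglyMeasurable
    · apply Filter.Eventually.of_forall
      intro x
      rw [Real.norm_eq_abs, abs_mul]
      calc |Real.sign (u (x + v))| * |φ i (u x) (u (x + v))|
          ≤ 1 * (K i * (|u x| + |u (x + v)|)) := by
            apply mul_le_mul (st5_sign_abs_le _) (hφabs i _ _) (abs_nonneg _) zero_le_one
      _ = K i * (|u x| + |u (x + v)|) := one_mul _
  have hSφ2 : ∀ (i : Fin k) (v : EuclideanSpace ℝ (Fin n)),
      Integrable (fun x : E => S x * φ i (u (x - v)) (u x)) volume := by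
    intro i v
    apply Integrable.mono' (((huL1.comp_add_right (-v)).abs.add huL1.abs).const_mul (K i))
    · have hc2 : Continuous fun x : E => φ i (u (x - v)) (u x) :=
        (hφcont i).comp ((hucont.comp (continuous_id.sub continuous_const)).prodMk hucont)
      exact (hSmeas.mul hc2.measurable).aestronglyMeasurable
    · apply Filter.Eventually.of_forall
      intro x
      rw [Real.norm_eq_abs, abs_mul]
      have hxv : x - v = x + (-v) := sub_eq_add_neg x v
      calc |S x| * |φ i (u (x - v)) (u x)| ≤ 1 * (K i * (|u (x - v)| + |u x|)) := by
            apply mul_le_mul (hSabs x) (hφabs i _ _) (abs_nonneg _) zero_le_one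
      _ = K i * (|u (x + -v)| + |u x|) := by rw [one_mul, hxv]
  -- x-integrability of T i (·, h)
  have hxint : ∀ (i : Fin k) (h : E), Integrable (fun x => T i (x, h)) volume := by
    intro i h
    have hrw : (fun x => T i (x, h)) = fun x =>
        (F i h / ‖β i h‖) * (S x * φ i (u x) (u (x + β i h)) - S x * φ i (u (x - β i h)) (u x)) := by
      funext x
      rw [hT]
      ring
    rw [hrw]
    exact (((hSφ1 i (β i h)).sub (hSφ2 i (β i h))).const_mul _)
  -- inner nonnegativity
  have hinner_nonneg : ∀ h : E, 0 ≤ ∫ x, Ψ (x, h) := by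
    intro h
    rw [hΨdef]
    rw [integral_finset_sum _ (fun i _ => hxint i h)]
    apply Finset.sum_nonneg
    intro i _
    set v : EuclideanSpace ℝ (Fin n) := β i h with hvdef
    have hrw : (fun x => T i (x, h)) = fun x =>
        (F i h / ‖v‖) * (S x * φ i (u x) (u (x + v)) - S x * φ i (u (x - v)) (u x)) := by
      funext x
      rw [hT]
      ring
    rw [hrw, integral_const_mul]
    apply mul_nonneg (div_nonneg (hFnn i h) (norm_nonneg _))
    rw [integral_sub (hSφ1 i v) (hSφ2 i v)]
    have htrans : ∫ x, S x * φ i (u (x - v)) (u x) =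
        ∫ x, Real.sign (u (x + v)) * φ i (u x) (u (x + v)) := by
      rw [← integral_add_right_eq_self (fun x => S x * φ i (u (x - v)) (u x)) v]
      congr 1
      funext x
      rw [hS]
      simp only [add_sub_cancel_right]
    rw [htrans, ← integral_sub (hSφ1 i v) (hSφ1' i v)]
    apply integral_nonneg
    intro x
    have h0 := st5_sign_flux_nonneg (φ i) (hφmono i) (hφanti i) (hφ0 i) (u x) (u (x + v))
    simp only [hS, Pi.zero_apply]
    nlinarith [h0]
  -- conclusions
  have hΨint : Integrable Ψ (volume.prod volume) := by
    rw [hΨdef]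
    exact integrable_finset_sum _ fun i _ => hTint i
  have hpull : (fun x => S x * G x) = fun x => ∫ h, Ψ (x, h) := by
    funext x
    rw [hG x, ← integral_const_mul]
    congr 1
    funext h
    rw [hΨdef, Finset.mul_sum]
  constructor
  · rw [show (fun x => Real.sign (u x) * G x) = fun x => S x * G x from rfl, hpull]
    exact hΨint.integral_prod_left
  · have h1 : ∫ x, Real.sign (u x) * G x = ∫ x, ∫ h, Ψ (x, h) := by
      rw [show (fun x => Real.sign (u x) * G x) = fun x => S x * G x from rfl, hpull]
    rw [h1]
    have hswap : ∫ (x : E), ∫ (h : E), Ψ (x, h) = ∫ (h : E), ∫ (x : E), Ψ (x, h) := by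
      apply integral_integral_swap (f := fun (x : E) (h : E) => Ψ (x, h))
      exact hΨint
    rw [hswap]
    exact integral_nonneg fun h => hinner_nonneg h

end

theorem stmt5
    (n k : ℕ) (hn : 1 ≤ n) (hk : 1 ≤ k) (hkn : k ≤ n)
    (Bsets : Fin k → Finset (Fin n))
    (hBne : ∀ i, (Bsets i).Nonempty)
    (hBdisj : ∀ i j, i ≠ j → Disjoint (Bsets i) (Bsets j))
    (hBcover : ∀ j : Fin n, ∃ i, j ∈ Bsets i)
    (β : Fin k → EuclideanSpace ℝ (Fin n) → EuclideanSpace ℝ (Fin n))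
    (hβ : ∀ (i : Fin k) (h : EuclideanSpace ℝ (Fin n)) (j : Fin n),
      β i h j = if j ∈ Bsets i then h j else 0)
    (ω : Fin k → EuclideanSpace ℝ (Fin n) → ℝ)
    (hωint : ∀ i, Integrable (ω i))
    (hωbdd : ∀ i, ∃ M, ∀ x, ω i x ≤ M)
    (hωnn : ∀ i x, 0 ≤ ω i x)
    (hωsupp : ∀ i, HasCompactSupport (ω i))
    (hωnorm : ∀ i, (∫ h, ω i (β i h)) = 1)
    (φ : Fin k → ℝ → ℝ → ℝ)
    (hφmono : ∀ i b, Monotone fun a => φ i a b)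
    (hφanti : ∀ i a, Antitone fun b => φ i a b)
    (hφ0 : ∀ i, φ i 0 0 = 0)
    (Bop : (EuclideanSpace ℝ (Fin n) → ℝ) → EuclideanSpace ℝ (Fin n) → ℝ)
    (hBop : ∀ u x, Bop u x =
      ∫ h, ∑ i : Fin k,
        (φ i (u x) (u (x + β i h)) - φ i (u (x - β i h)) (u x)) / ‖β i h‖ * ω i (β i h))
    (hφC1 : ∀ i, ContDiff ℝ 1 fun q : ℝ × ℝ => φ i q.1 q.2)
    (hφbdd : ∀ i, ∃ K, ∀ q : ℝ × ℝ, ‖fderiv ℝ (fun q : ℝ × ℝ => φ i q.1 q.2) q‖ ≤ K)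
    (Lap : (EuclideanSpace ℝ (Fin n) → ℝ) → EuclideanSpace ℝ (Fin n) → ℝ)
    (hLap : ∀ u x, Lap u x = ∑ j : Fin n,
      fderiv ℝ (fun y => fderiv ℝ u y (EuclideanSpace.single j 1)) x (EuclideanSpace.single j 1))
    (lam ε : ℝ) (hlam : 0 < lam) (hε : 0 < ε)
    (u : EuclideanSpace ℝ (Fin n) → ℝ)
    (hu : ContDiff ℝ 2 u) (hubdd : ∃ M, ∀ x, |u x| ≤ M)
    (huL1 : Integrable u) (huL2 : MemLp u 2 volume)
    (hgradL1 : Integrable fun x => ‖fderiv ℝ u x‖)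
    (hgradL2 : MemLp (fun x => ‖fderiv ℝ u x‖) 2 volume)
    (hlapL1 : Integrable (Lap u)) (hlapL2 : MemLp (Lap u) 2 volume)
    (g : EuclideanSpace ℝ (Fin n) → ℝ)
    (hg1 : Integrable g) (hginf : MemLp g ⊤ volume)
    (heq : ∀ᵐ x, u x + lam * Bop u x - ε * Lap u x = g x)
    : eLpNorm u 1 volume ≤ eLpNorm g 1 volume := by
  classical
  have hucont : Continuous u := hu.continuous
  have hSmeas : Measurable fun x : EuclideanSpace ℝ (Fin n) => Real.sign (u x) :=
    st5_sign_meas.comp hucont.measurable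
  -- continuity of β i
  have hβcont : ∀ i, Continuous (β i) := by
    intro i
    have hβeq : β i = fun h : EuclideanSpace ℝ (Fin n) =>
        WithLp.toLp 2 (fun j => if j ∈ Bsets i then h j else 0) :=
      funext fun h => by ext j; simp [hβ i h j]
    rw [hβeq]
    apply (PiLp.continuous_toLp 2 _).comp
    apply continuous_pi
    intro j
    by_cases hj : j ∈ Bsets i
    · simp only [hj, if_true]
      exact PiLp.continuous_apply 2 _ j
    · simp only [hj, if_false]
      exact continuous_const
  -- integrability of the composed kernels
  have hFint : ∀ i, Integrable (fun h => ω i (β i h)) volume := by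
    intro i
    by_contra hni
    have h0 := integral_undef hni
    have h1 := hωnorm i
    rw [h0] at h1
    exact one_ne_zero h1.symm
  -- nonlocal part
  have hNL := st5_nonlocal β hβcont (fun i h => ω i (β i h)) hFint
    (fun i h => hωnn i (β i h)) φ hφmono hφanti hφ0 hφC1 hφbdd u hu huL1 hgradL1
    (Bop u) (fun x => hBop u x)
  obtain ⟨hSB_int, hSB_nonneg⟩ := hNL
  -- Laplacian part
  have hLap_nonpos : ∫ x, Real.sign (u x) * Lap u x ≤ 0 :=
    st5_lap_nonpos u hu hgradL1 (Lap u) (fun x => hLap u x) hlapL1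
  -- continuity of Lap u
  have hLapCont : Continuous (Lap u) := by
    have hLeq : Lap u = fun x => ∑ j : Fin n,
        fderiv ℝ (fun y => fderiv ℝ u y (EuclideanSpace.single j 1)) x
          (EuclideanSpace.single j 1) := funext fun x => hLap u x
    rw [hLeq]
    apply continuous_finset_sum
    intro j _
    have hwC1 : ContDiff ℝ 1 (fun y => fderiv ℝ u y (EuclideanSpace.single j 1)) :=
      (hu.fderiv_right (by norm_num)).clm_apply contDiff_const
    exact (hwC1.continuous_fderiv one_ne_zero).clm_apply continuous_const
  -- integrable products
  have hSu_int : Integrable (fun x => Real.sign (u x) * u x) volume := by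
    have : (fun x => Real.sign (u x) * u x) = fun x => |u x| := funext fun x => st5_sign_mul_self (u x)
    rw [this]
    exact huL1.abs
  have hSL_int : Integrable (fun x => Real.sign (u x) * Lap u x) volume := by
    apply Integrable.mono' hlapL1.abs
    · exact (hSmeas.mul hLapCont.measurable).aestronglyMeasurable
    · apply Filter.Eventually.of_forall
      intro x
      rw [Real.norm_eq_abs, abs_mul]
      calc |Real.sign (u x)| * |Lap u x| ≤ 1 * |Lap u x| :=
            mul_le_mul_of_nonneg_right (st5_sign_abs_le (u x)) (abs_nonneg _)
      _ = |Lap u x| := one_mul _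
  have hSg_int : Integrable (fun x => Real.sign (u x) * g x) volume := by
    apply Integrable.mono' hg1.abs
    · exact (hSmeas.aemeasurable.mul hg1.1.aemeasurable).aestronglyMeasurable
    · apply Filter.Eventually.of_forall
      intro x
      rw [Real.norm_eq_abs, abs_mul]
      calc |Real.sign (u x)| * |g x| ≤ 1 * |g x| :=
            mul_le_mul_of_nonneg_right (st5_sign_abs_le (u x)) (abs_nonneg _)
      _ = |g x| := one_mul _
  -- the a.e. identity multiplied by the sign
  have hae : (fun x => Real.sign (u x) * u x) =ᵐ[volume] fun x =>
      Real.sign (u x) * g x - lam * (Real.sign (u x) * Bop u x) + ε * (Real.sign (u x) * Lap u x) := by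
    filter_upwards [heq] with x hx
    have hux : u x = g x - lam * Bop u x + ε * Lap u x := by linarith
    calc Real.sign (u x) * u x = Real.sign (u x) * (g x - lam * Bop u x + ε * Lap u x) := by rw [← hux]
    _ = Real.sign (u x) * g x - lam * (Real.sign (u x) * Bop u x) + ε * (Real.sign (u x) * Lap u x) := by ring
  have hint : ∫ x, Real.sign (u x) * u x =
      (∫ x, Real.sign (u x) * g x) - lam * (∫ x, Real.sign (u x) * Bop u x) + ε * (∫ x, Real.sign (u x) * Lap u x) := by
    rw [integral_congr_ae hae]
    have h1 : Integrable (fun x => Real.sign (u x) * g x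
        - lam * (Real.sign (u x) * Bop u x)) volume := hSg_int.sub (hSB_int.const_mul lam)
    have h2 : Integrable (fun x => ε * (Real.sign (u x) * Lap u x)) volume :=
      hSL_int.const_mul ε
    have h3 : Integrable (fun x => lam * (Real.sign (u x) * Bop u x)) volume :=
      hSB_int.const_mul lam
    rw [integral_add h1 h2, integral_sub hSg_int h3, integral_const_mul, integral_const_mul]
  have habs_u : ∫ x, Real.sign (u x) * u x = ∫ x, |u x| := by
    congr 1
    funext x
    exact st5_sign_mul_self (u x)
  have habs_g : ∫ x, Real.sign (u x) * g x ≤ ∫ x, |g x| := by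
    apply integral_mono hSg_int hg1.abs
    intro x
    calc Real.sign (u x) * g x ≤ |Real.sign (u x) * g x| := le_abs_self _
    _ = |Real.sign (u x)| * |g x| := abs_mul _ _
    _ ≤ 1 * |g x| := mul_le_mul_of_nonneg_right (st5_sign_abs_le (u x)) (abs_nonneg _)
    _ = |g x| := one_mul _
  have hmain : ∫ x, |u x| ≤ ∫ x, |g x| := by
    rw [← habs_u, hint]
    have h1 : 0 ≤ lam * ∫ x, Real.sign (u x) * Bop u x := mul_nonneg hlam.le hSB_nonneg
    have h2 : ε * ∫ x, Real.sign (u x) * Lap u x ≤ 0 :=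
      mul_nonpos_of_nonneg_of_nonpos hε.le hLap_nonpos
    linarith
  -- convert to eLpNorm
  rw [eLpNorm_one_eq_lintegral_enorm, eLpNorm_one_eq_lintegral_enorm,
    ← ofReal_integral_norm_eq_lintegral_enorm huL1,
    ← ofReal_integral_norm_eq_lintegral_enorm hg1]
  apply ENNReal.ofReal_le_ofReal
  simpa [Real.norm_eq_abs] using hmain
end

section
/- Suppose each flux φ_i is continuously differentiable on ℝ × ℝ with bounded partial derivatives, and let λ, ε > 0. Let u : ℝⁿ → ℝ be a bounded C² function with u, |∇u|, Δu ∈ L¹(ℝⁿ) ∩ L²(ℝⁿ), and let g ∈ L¹(ℝⁿ) ∩ L^∞(ℝⁿ). If u(x) + λ(Bu)(x) − εΔu(x) = g(x) for almost every x ∈ ℝⁿ, then the maximum principle holds: −‖g⁻‖_{L^∞(ℝⁿ)} ≤ u(x) ≤ ‖g⁺‖_{L^∞(ℝⁿ)} for almost every x ∈ ℝⁿ, where g⁺ = max{g,0} and g⁻ = max{−g,0}. In particular ‖u‖_{L^∞(ℝⁿ)} ≤ ‖g‖_{L^∞(ℝⁿ)}. -/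
open MeasureTheory Filter


lemma secondDeriv_nonpos_of_isLocalMax {f : ℝ → ℝ}
    (hf : Differentiable ℝ f) (hf' : DifferentiableAt ℝ (deriv f) 0)
    (hmax : IsLocalMax f 0) : deriv (deriv f) 0 ≤ 0 := by
  by_contra hc
  push_neg at hc
  set c := deriv (deriv f) 0 with hcdef
  have h0 : deriv f 0 = 0 := hmax.deriv_eq_zero
  have hD : HasDerivAt (deriv f) c 0 := hf'.hasDerivAt
  rw [hasDerivAt_iff_tendsto_slope] at hD
  -- eventually in 𝓝[>] 0, slope > c/2, i.e. deriv f t > 0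
  have hhalf : ∀ᶠ t in nhdsWithin (0:ℝ) (Set.Ioi 0), c/2 < slope (deriv f) 0 t := by
    have : Set.Ioi (0:ℝ) ⊆ {(0:ℝ)}ᶜ := fun t ht => (ne_of_gt ht)
    have h2 := hD.mono_left (nhdsWithin_mono (0:ℝ) this)
    exact h2.eventually (eventually_gt_nhds (by linarith : c/2 < c))
  have hpos : ∀ᶠ t in nhdsWithin (0:ℝ) (Set.Ioi 0), 0 < deriv f t := by
    filter_upwards [hhalf, self_mem_nhdsWithin] with t ht ht0
    have ht0' : (0:ℝ) < t := ht0
    have : slope (deriv f) 0 t = deriv f t / t := by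
      simp [slope_def_field, h0]
    rw [this] at ht
    have := mul_lt_mul_of_pos_right ht ht0'
    rw [div_mul_cancel₀] at this
    · nlinarith
    · exact ne_of_gt ht0'
  rw [eventually_nhdsWithin_iff] at hpos
  rcases Metric.eventually_nhds_iff.1 hpos with ⟨η, hη, hball⟩
  rcases Metric.eventually_nhds_iff.1 hmax with ⟨ρ, hρ, hρball⟩
  set r := min η ρ / 2 with hr
  have hrpos : 0 < r := by positivity
  have hmono : StrictMonoOn f (Set.Icc 0 r) := by
    apply strictMonoOn_of_deriv_pos (convex_Icc 0 r) (hf.continuous.continuousOn)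
    intro x hx
    rw [interior_Icc] at hx
    apply hball
    · rw [Real.dist_eq, sub_zero, abs_of_pos hx.1]
      have h3 : r < η := by
        have := min_le_left η ρ
        have hmin : 0 < min η ρ := lt_min hη hρ
        simp only [hr]; linarith
      linarith [hx.2]
    · exact hx.1
  have h1 : f 0 < f r := hmono ⟨le_refl 0, hrpos.le⟩ ⟨hrpos.le, le_refl r⟩ hrpos
  have h2 : f r ≤ f 0 := by
    apply hρball
    rw [Real.dist_eq, sub_zero, abs_of_pos hrpos]
    have := min_le_right η ρ
    have hmin : 0 < min η ρ := lt_min hη hρ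
    simp only [hr]; linarith
  linarith
lemma secondDeriv_nonneg_of_isLocalMin {f : ℝ → ℝ}
    (hf : Differentiable ℝ f) (hf' : DifferentiableAt ℝ (deriv f) 0)
    (hmin : IsLocalMin f 0) : 0 ≤ deriv (deriv f) 0 := by
  have hnegd : deriv (fun x => -f x) = fun x => -deriv f x := by
    funext x; exact deriv.neg
  have h1 : Differentiable ℝ (fun x => -f x) := hf.neg
  have h2 : DifferentiableAt ℝ (deriv (fun x => -f x)) 0 := by
    rw [hnegd]; exact hf'.neg
  have h3 := secondDeriv_nonpos_of_isLocalMax h1 h2 hmin.neg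
  rw [hnegd] at h3
  have : deriv (fun x => -deriv f x) 0 = -deriv (deriv f) 0 := deriv.neg
  linarith [h3, this ▸ h3]

-- ae to everywhere
lemma le_of_ae_le_of_continuous {n : ℕ} {f : EuclideanSpace ℝ (Fin n) → ℝ} {c : ℝ}
    (hf : Continuous f) (h : ∀ᵐ x, f x ≤ c) : ∀ x, f x ≤ c := by
  intro x
  by_contra hc
  push_neg at hc
  have hopen : IsOpen {y | c < f y} := isOpen_lt continuous_const hf
  have hpos : 0 < volume {y | c < f y} := hopen.measure_pos volume ⟨x, hc⟩
  have : volume {y | c < f y} = 0 := by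
    apply measure_mono_null _ h
    intro y hy
    simpa using not_le.2 hy
  simp [this] at hpos


variable {E : Type*} [NormedAddCommGroup E] [NormedSpace ℝ E]

lemma hasDerivAt_line (x₀ v : E) (t : ℝ) :
    HasDerivAt (fun t : ℝ => x₀ + t • v) v t := by
  simpa using ((hasDerivAt_id t).smul_const v).const_add x₀

lemma hasDerivAt_slice {f : E → ℝ} (hf : Differentiable ℝ f) (x₀ v : E) (t : ℝ) :
    HasDerivAt (fun t : ℝ => f (x₀ + t • v)) (fderiv ℝ f (x₀ + t • v) v) t :=
  (hf (x₀ + t • v)).hasFDerivAt.comp_hasDerivAt t (hasDerivAt_line x₀ v t)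

lemma deriv_slice {f : E → ℝ} (hf : Differentiable ℝ f) (x₀ v : E) :
    deriv (fun t : ℝ => f (x₀ + t • v)) = fun t => fderiv ℝ f (x₀ + t • v) v := by
  funext t; exact (hasDerivAt_slice hf x₀ v t).deriv

lemma contDiff_fderiv_apply {f : E → ℝ} (hf : ContDiff ℝ 2 f) (v : E) :
    ContDiff ℝ 1 (fun y => fderiv ℝ f y v) :=
  (hf.fderiv_right (by norm_num)).clm_apply contDiff_const

lemma secondDeriv_slice {f : E → ℝ} (hf : ContDiff ℝ 2 f) (x₀ v : E) :
    deriv (deriv (fun t : ℝ => f (x₀ + t • v))) 0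
      = fderiv ℝ (fun y => fderiv ℝ f y v) x₀ v := by
  rw [deriv_slice (hf.differentiable (by norm_num)) x₀ v]
  have hG : Differentiable ℝ (fun y => fderiv ℝ f y v) :=
    (contDiff_fderiv_apply hf v).differentiable (by norm_num)
  have := hasDerivAt_slice hG x₀ v 0
  simpa using this.deriv

lemma differentiableAt_deriv_slice {f : E → ℝ} (hf : ContDiff ℝ 2 f) (x₀ v : E) :
    DifferentiableAt ℝ (deriv (fun t : ℝ => f (x₀ + t • v))) 0 := by
  rw [deriv_slice (hf.differentiable (by norm_num)) x₀ v]
  have hG : Differentiable ℝ (fun y => fderiv ℝ f y v) :=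
    (contDiff_fderiv_apply hf v).differentiable (by norm_num)
  exact (hasDerivAt_slice hG x₀ v 0).differentiableAt

-- the 1-D sqrt-quadratic facts
section sqrtquad
variable (b c : ℝ)

noncomputable def sq1 (t : ℝ) : ℝ := Real.sqrt (c + 2*b*t + t^2)

lemma sq1_Qpos (hc : 1 ≤ c - b^2) (t : ℝ) : 0 < c + 2*b*t + t^2 := by nlinarith [sq_nonneg (t + b)]

lemma sq1_hasDerivAt (hc : 1 ≤ c - b^2) (t : ℝ) :
    HasDerivAt (sq1 b c) ((b + t) / Real.sqrt (c + 2*b*t + t^2)) t := by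
  have hQ : HasDerivAt (fun t : ℝ => c + 2*b*t + t^2) (2*b + 2*t) t := by
    have h1 : HasDerivAt (fun t : ℝ => c + 2*b*t) (2*b) t := by
      simpa using ((hasDerivAt_id t).const_mul (2*b)).const_add c
    simpa [two_mul, mul_comm] using h1.fun_add (hasDerivAt_pow 2 t)
  have hpos := sq1_Qpos b c hc t
  have hs : HasDerivAt (sq1 b c) _ t := (Real.hasDerivAt_sqrt (ne_of_gt hpos)).comp t hQ
  have hsq : Real.sqrt (c + 2*b*t + t^2) ≠ 0 := by positivity
  convert hs using 1
  field_simp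
lemma sq1_differentiable (hc : 1 ≤ c - b^2) : Differentiable ℝ (sq1 b c) :=
  fun t => (sq1_hasDerivAt b c hc t).differentiableAt

lemma sq1_deriv (hc : 1 ≤ c - b^2) :
    deriv (sq1 b c) = fun t => (b + t) / Real.sqrt (c + 2*b*t + t^2) := by
  funext t; exact (sq1_hasDerivAt b c hc t).deriv

lemma sq1_deriv_hasDerivAt (hc : 1 ≤ c - b^2) :
    HasDerivAt (deriv (sq1 b c))
      ((1 * Real.sqrt c - b * (b / Real.sqrt c)) / Real.sqrt c ^ 2) 0 := by
  rw [sq1_deriv b c hc]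
  have h1 : HasDerivAt (fun t : ℝ => b + t) 1 0 := by simpa using (hasDerivAt_id (0:ℝ)).const_add b
  have h2 : HasDerivAt (fun t : ℝ => Real.sqrt (c + 2*b*t + t^2)) (b / Real.sqrt c) 0 := by
    have := sq1_hasDerivAt b c hc 0
    unfold sq1 at this
    simpa using this
  have hc0 : (0:ℝ) < c := by nlinarith [sq_nonneg b]
  have hne : Real.sqrt (c + 2*b*0 + 0^2) ≠ 0 := ne_of_gt (Real.sqrt_pos.2 (sq1_Qpos b c hc 0))
  have := h1.fun_div h2 (by simpa using hne)
  simpa using this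

lemma sq1_derivAt0 (hc : 1 ≤ c - b^2) :
    DifferentiableAt ℝ (deriv (sq1 b c)) 0 ∧ deriv (deriv (sq1 b c)) 0 ≤ 1 := by
  have h := sq1_deriv_hasDerivAt b c hc
  refine ⟨h.differentiableAt, ?_⟩
  rw [h.deriv]
  have hc0 : (0:ℝ) < c := by nlinarith [sq_nonneg b]
  have hs : Real.sqrt c ^ 2 = c := Real.sq_sqrt hc0.le
  have hs1 : 1 ≤ Real.sqrt c := by
    rw [show (1:ℝ) = Real.sqrt 1 by simp]
    exact Real.sqrt_le_sqrt (by nlinarith [sq_nonneg b])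
  have hspos : 0 < Real.sqrt c := by linarith
  rw [div_le_one (by positivity)]
  have : b * (b / Real.sqrt c) = b^2 / Real.sqrt c := by ring
  rw [this, hs]
  have h1 : b^2 / Real.sqrt c ≥ 0 := by positivity
  nlinarith
end sqrtquad


noncomputable def psiE {n : ℕ} (x : EuclideanSpace ℝ (Fin n)) : ℝ := Real.sqrt (1 + ‖x‖^2)

lemma psiE_cont {n : ℕ} : Continuous (psiE (n := n)) := by
  unfold psiE
  exact Real.continuous_sqrt.comp (by continuity)

lemma psiE_nonneg {n : ℕ} (x : EuclideanSpace ℝ (Fin n)) : 0 ≤ psiE x := Real.sqrt_nonneg _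

lemma psiE_ge_norm {n : ℕ} (x : EuclideanSpace ℝ (Fin n)) : ‖x‖ ≤ psiE x := by
  unfold psiE
  nth_rewrite 1 [show ‖x‖ = Real.sqrt (‖x‖^2) from (Real.sqrt_sq (norm_nonneg x)).symm]
  exact Real.sqrt_le_sqrt (by nlinarith [sq_nonneg ‖x‖])

lemma sqrt_one_add_sq_lip (a b : ℝ) : Real.sqrt (1+a^2) ≤ Real.sqrt (1+b^2) + |a - b| := by
  have h1 : 0 ≤ Real.sqrt (1+b^2) := Real.sqrt_nonneg _
  have hb : |b| ≤ Real.sqrt (1+b^2) := by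
    rw [← Real.sqrt_sq_eq_abs]; exact Real.sqrt_le_sqrt (by nlinarith)
  have h2 : Real.sqrt (1+a^2) ≤ Real.sqrt ((Real.sqrt (1+b^2) + |a-b|)^2) := by
    apply Real.sqrt_le_sqrt
    have hsq : Real.sqrt (1+b^2)^2 = 1+b^2 := Real.sq_sqrt (by positivity)
    have h3 : (a-b)*b ≤ |a-b| * |b| := by
      rw [← abs_mul]; exact le_abs_self _
    nlinarith [sq_abs (a-b), abs_nonneg (a-b)]
  rwa [Real.sqrt_sq (by positivity)] at h2

lemma psiE_lip {n : ℕ} (x y : EuclideanSpace ℝ (Fin n)) : psiE y ≤ psiE x + ‖y - x‖ := by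
  unfold psiE
  calc Real.sqrt (1 + ‖y‖^2) ≤ Real.sqrt (1 + ‖x‖^2) + |‖y‖ - ‖x‖| := sqrt_one_add_sq_lip _ _
    _ ≤ Real.sqrt (1 + ‖x‖^2) + ‖y - x‖ := by linarith [abs_norm_sub_norm_le y x]

lemma psiE_cond {n : ℕ} (x : EuclideanSpace ℝ (Fin n)) (j : Fin n) :
    1 ≤ (1 + ‖x‖^2) - (x j)^2 := by
  have h := abs_real_inner_le_norm x (EuclideanSpace.single j (1:ℝ))
  rw [EuclideanSpace.inner_single_right, EuclideanSpace.norm_single] at h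
  simp only [map_one, one_mul, norm_one, mul_one] at h
  have : (x j)^2 ≤ ‖x‖^2 := by
    have h2 : |(x j)| ≤ ‖x‖ := by simpa using h
    nlinarith [abs_nonneg (x j), sq_abs (x j)]
  linarith

lemma psiE_slice {n : ℕ} (x₀ : EuclideanSpace ℝ (Fin n)) (j : Fin n) :
    (fun t : ℝ => psiE (x₀ + t • EuclideanSpace.single j (1:ℝ)))
      = sq1 (x₀ j) (1 + ‖x₀‖^2) := by
  funext t
  unfold psiE sq1
  congr 1
  rw [norm_add_sq_real]
  rw [inner_smul_right, EuclideanSpace.inner_single_right, norm_smul, EuclideanSpace.norm_single]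
  simp only [map_one, one_mul, norm_one, mul_one, Real.norm_eq_abs]
  rw [sq_abs]
  simp only [starRingEnd_apply, star_trivial]
  ring

set_option maxHeartbeats 2000000 in
theorem stmt6
    (n k : ℕ) (hn : 1 ≤ n) (hk : 1 ≤ k) (hkn : k ≤ n)
    (Bsets : Fin k → Finset (Fin n))
    (hBne : ∀ i, (Bsets i).Nonempty)
    (hBdisj : ∀ i j, i ≠ j → Disjoint (Bsets i) (Bsets j))
    (hBcover : ∀ j : Fin n, ∃ i, j ∈ Bsets i)
    (β : Fin k → EuclideanSpace ℝ (Fin n) → EuclideanSpace ℝ (Fin n))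
    (hβ : ∀ (i : Fin k) (h : EuclideanSpace ℝ (Fin n)) (j : Fin n),
      β i h j = if j ∈ Bsets i then h j else 0)
    (ω : Fin k → EuclideanSpace ℝ (Fin n) → ℝ)
    (hωint : ∀ i, Integrable (ω i))
    (hωbdd : ∀ i, ∃ M, ∀ x, ω i x ≤ M)
    (hωnn : ∀ i x, 0 ≤ ω i x)
    (hωsupp : ∀ i, HasCompactSupport (ω i))
    (hωnorm : ∀ i, (∫ h, ω i (β i h)) = 1)
    (φ : Fin k → ℝ → ℝ → ℝ)
    (hφmono : ∀ i b, Monotone fun a => φ i a b)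
    (hφanti : ∀ i a, Antitone fun b => φ i a b)
    (hφ0 : ∀ i, φ i 0 0 = 0)
    (Bop : (EuclideanSpace ℝ (Fin n) → ℝ) → EuclideanSpace ℝ (Fin n) → ℝ)
    (hBop : ∀ u x, Bop u x =
      ∫ h, ∑ i : Fin k,
        (φ i (u x) (u (x + β i h)) - φ i (u (x - β i h)) (u x)) / ‖β i h‖ * ω i (β i h))
    (hφC1 : ∀ i, ContDiff ℝ 1 fun q : ℝ × ℝ => φ i q.1 q.2)
    (hφbdd : ∀ i, ∃ K, ∀ q : ℝ × ℝ, ‖fderiv ℝ (fun q : ℝ × ℝ => φ i q.1 q.2) q‖ ≤ K)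
    (Lap : (EuclideanSpace ℝ (Fin n) → ℝ) → EuclideanSpace ℝ (Fin n) → ℝ)
    (hLap : ∀ u x, Lap u x = ∑ j : Fin n,
      fderiv ℝ (fun y => fderiv ℝ u y (EuclideanSpace.single j 1)) x (EuclideanSpace.single j 1))
    (lam ε : ℝ) (hlam : 0 < lam) (hε : 0 < ε)
    (u : EuclideanSpace ℝ (Fin n) → ℝ)
    (hu : ContDiff ℝ 2 u) (hubdd : ∃ M, ∀ x, |u x| ≤ M)
    (huL1 : Integrable u) (huL2 : MemLp u 2 volume)
    (hgradL1 : Integrable fun x => ‖fderiv ℝ u x‖)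
    (hgradL2 : MemLp (fun x => ‖fderiv ℝ u x‖) 2 volume)
    (hlapL1 : Integrable (Lap u)) (hlapL2 : MemLp (Lap u) 2 volume)
    (g : EuclideanSpace ℝ (Fin n) → ℝ)
    (hg1 : Integrable g) (hginf : MemLp g ⊤ volume)
    (heq : ∀ᵐ x, u x + lam * Bop u x - ε * Lap u x = g x)
    : (∀ᵐ x, -(eLpNorm (fun y => max (-g y) 0) ⊤ volume).toReal ≤ u x ∧
        u x ≤ (eLpNorm (fun y => max (g y) 0) ⊤ volume).toReal) ∧
      eLpNorm u ⊤ volume ≤ eLpNorm g ⊤ volume := by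
  classical
  obtain ⟨M, hM⟩ := hubdd
  have hM0 : 0 ≤ M := le_trans (abs_nonneg _) (hM 0)
  choose K hK using hφbdd
  have hK0 : ∀ i, 0 ≤ K i := fun i => le_trans (norm_nonneg _) (hK i 0)
  -- Lipschitz estimate for φ
  have hφlip : ∀ i (p q : ℝ × ℝ), |φ i p.1 p.2 - φ i q.1 q.2| ≤ K i * ‖p - q‖ := by
    intro i p q
    have := Convex.norm_image_sub_le_of_norm_fderiv_le
      (f := fun q : ℝ × ℝ => φ i q.1 q.2) (s := Set.univ) (𝕜 := ℝ)
      (fun x _ => ((hφC1 i).differentiable one_ne_zero).differentiableAt)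
      (fun x _ => hK i x) convex_univ (Set.mem_univ q) (Set.mem_univ p)
    simpa [Real.norm_eq_abs] using this
  have hφest1 : ∀ i (a t : ℝ), 0 ≤ t → φ i a a - K i * t ≤ φ i a (a + t) := by
    intro i a t ht
    have h := hφlip i (a, a + t) (a, a)
    have hnorm : ‖((a, a + t) : ℝ × ℝ) - (a, a)‖ = t := by
      rw [Prod.mk_sub_mk, Prod.norm_def]
      simp [abs_of_nonneg ht, ht]
    rw [hnorm] at h
    have := abs_le.1 h
    linarith [this.1]
  have hφest2 : ∀ i (a t : ℝ), 0 ≤ t → φ i (a + t) a ≤ φ i a a + K i * t := by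
    intro i a t ht
    have h := hφlip i (a + t, a) (a, a)
    have hnorm : ‖((a + t, a) : ℝ × ℝ) - (a, a)‖ = t := by
      rw [Prod.mk_sub_mk, Prod.norm_def]
      simp [abs_of_nonneg ht, ht]
    rw [hnorm] at h
    have := abs_le.1 h
    linarith [this.2]
  have hφest3 : ∀ i (a t : ℝ), 0 ≤ t → φ i a (a - t) ≤ φ i a a + K i * t := by
    intro i a t ht
    have h := hφlip i (a, a - t) (a, a)
    have hnorm : ‖((a, a - t) : ℝ × ℝ) - (a, a)‖ = t := by
      rw [Prod.mk_sub_mk, Prod.norm_def]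
      simp [abs_of_nonneg ht, ht]
    rw [hnorm] at h
    have := abs_le.1 h
    linarith [this.2]
  have hφest4 : ∀ i (a t : ℝ), 0 ≤ t → φ i a a - K i * t ≤ φ i (a - t) a := by
    intro i a t ht
    have h := hφlip i (a - t, a) (a, a)
    have hnorm : ‖((a - t, a) : ℝ × ℝ) - (a, a)‖ = t := by
      rw [Prod.mk_sub_mk, Prod.norm_def]
      simp [abs_of_nonneg ht, ht]
    rw [hnorm] at h
    have := abs_le.1 h
    linarith [this.1]
  have hφd1 : ∀ i (a b b' : ℝ), |φ i a b - φ i a b'| ≤ K i * |b - b'| := by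
    intro i a b b'
    have h := hφlip i (a, b) (a, b')
    rw [Prod.mk_sub_mk, Prod.norm_def] at h
    simpa [max_eq_right (abs_nonneg (b - b'))] using h
  have hφd2 : ∀ i (a a' b : ℝ), |φ i a b - φ i a' b| ≤ K i * |a - a'| := by
    intro i a a' b
    have h := hφlip i (a, b) (a', b)
    rw [Prod.mk_sub_mk, Prod.norm_def] at h
    simpa [max_eq_left (abs_nonneg (a - a'))] using h
  -- integrability of ω ∘ β
  have hωβint : ∀ i, Integrable (fun h => ω i (β i h)) := by
    intro i
    by_contra hni
    have := integral_undef hni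
    rw [hωnorm i] at this
    norm_num at this
  -- β is continuous
  have hβsum : ∀ i (h : EuclideanSpace ℝ (Fin n)),
      β i h = ∑ j ∈ Bsets i, (h j) • EuclideanSpace.single j (1:ℝ) := by
    intro i h
    ext j
    rw [hβ]
    rw [show (∑ j' ∈ Bsets i, (h j') • EuclideanSpace.single j' (1:ℝ)) j
        = ∑ j' ∈ Bsets i, ((h j') • EuclideanSpace.single j' (1:ℝ)) j by rw [WithLp.ofLp_sum, Finset.sum_apply]]
    simp only [PiLp.smul_apply, EuclideanSpace.single_apply, smul_eq_mul, mul_ite, mul_one,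
      mul_zero]
    rw [Finset.sum_ite_eq (Bsets i) j (fun j' => h j')]
  have hβcont : ∀ i, Continuous (β i) := by
    intro i
    have : β i = fun h => ∑ j ∈ Bsets i, (h j) • EuclideanSpace.single j (1:ℝ) :=
      funext (hβsum i)
    rw [this]
    apply continuous_finset_sum
    intro j _
    exact ((EuclideanSpace.proj j).continuous).smul continuous_const
  have hucont : Continuous u := hu.continuous
  have hud : Differentiable ℝ u := hu.differentiable (by norm_num)
  -- local Lipschitz bounds for u
  have hulip : ∀ (x₀ : EuclideanSpace ℝ (Fin n)) (R : ℝ), 0 ≤ R → ∃ L, 0 ≤ L ∧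
      ∀ x ∈ Metric.closedBall x₀ R, ∀ y ∈ Metric.closedBall x₀ R, |u x - u y| ≤ L * ‖x - y‖ := by
    intro x₀ R hR
    have hcont : ContinuousOn (fun w => ‖fderiv ℝ u w‖) (Metric.closedBall x₀ R) :=
      ((hu.continuous_fderiv (by norm_num)).norm).continuousOn
    obtain ⟨z, hz, hzmax⟩ := (isCompact_closedBall x₀ R).exists_isMaxOn
      ⟨x₀, Metric.mem_closedBall_self hR⟩ hcont
    refine ⟨‖fderiv ℝ u z‖, norm_nonneg _, ?_⟩
    intro x hx y hy
    have := Convex.norm_image_sub_le_of_norm_fderiv_le (𝕜 := ℝ)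
      (fun w _ => hud w)
      (fun w hw => hzmax hw) (convex_closedBall x₀ R) hy hx
    simpa [Real.norm_eq_abs] using this
  -- support radii
  have hωR : ∀ i, ∃ R, 0 ≤ R ∧ ∀ z : EuclideanSpace ℝ (Fin n), R < ‖z‖ → ω i z = 0 := by
    intro i
    obtain ⟨r, hr⟩ := (hωsupp i).isCompact.isBounded.subset_closedBall 0
    refine ⟨max r 0, le_max_right _ _, ?_⟩
    intro z hz
    apply image_eq_zero_of_notMem_tsupport
    intro hmem
    have := hr hmem
    rw [Metric.mem_closedBall, dist_zero_right] at this
    have h2 : r ≤ max r 0 := le_max_left _ _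
    linarith
  -- continuity of Bop u
  have hBopCont : Continuous (fun x => Bop u x) := by
    have hrw : (fun x => Bop u x) = fun x => ∫ h, ∑ i : Fin k,
        (φ i (u x) (u (x + β i h)) - φ i (u (x - β i h)) (u x)) / ‖β i h‖ * ω i (β i h) :=
      funext (hBop u)
    rw [hrw, continuous_iff_continuousAt]
    intro x₀
    choose Rω hRω0 hRωz using hωR
    have hLex : ∀ i : Fin k, ∃ L, 0 ≤ L ∧
        ∀ x ∈ Metric.closedBall x₀ (1 + Rω i), ∀ y ∈ Metric.closedBall x₀ (1 + Rω i),
          |u x - u y| ≤ L * ‖x - y‖ := fun i => hulip x₀ (1 + Rω i) (by linarith [hRω0 i])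
    choose L hL0 hLlip using hLex
    apply continuousAt_of_dominated (bound := fun h => ∑ i : Fin k, (2 * K i * L i) * ω i (β i h))
    · apply Filter.Eventually.of_forall
      intro x
      simp only [div_eq_mul_inv]
      apply Finset.aestronglyMeasurable_fun_sum
      intro i _
      have c1 : Continuous fun h : EuclideanSpace ℝ (Fin n) => u (x + β i h) :=
        hucont.comp (continuous_const.add (hβcont i))
      have c2 : Continuous fun h : EuclideanSpace ℝ (Fin n) => u (x - β i h) :=
        hucont.comp (continuous_const.sub (hβcont i))
      have c3 : Continuous fun h : EuclideanSpace ℝ (Fin n) => φ i (u x) (u (x + β i h)) :=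
        ((hφC1 i).continuous).comp (continuous_const.prodMk c1)
      have c4 : Continuous fun h : EuclideanSpace ℝ (Fin n) => φ i (u (x - β i h)) (u x) :=
        ((hφC1 i).continuous).comp (c2.prodMk continuous_const)
      have minv : Measurable fun h : EuclideanSpace ℝ (Fin n) => (‖β i h‖)⁻¹ :=
        ((continuous_norm.comp (hβcont i)).measurable).inv
      exact (((c3.sub c4).aestronglyMeasurable).mul minv.aestronglyMeasurable).mul
        (hωβint i).aestronglyMeasurable
    · filter_upwards [Metric.ball_mem_nhds x₀ one_pos] with x hx
      apply Filter.Eventually.of_forall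
      intro h
      refine le_trans (Finset.abs_sum_le_sum_abs _ _) (Finset.sum_le_sum ?_)
      intro i _
      set z := β i h with hzdef
      rcases lt_or_ge (Rω i) ‖z‖ with hfar | hnear
      · rw [hRωz i z hfar]
        simp
      · have hKL : 0 ≤ 2 * K i * L i := by
          have := hK0 i; have := hL0 i; positivity
        by_cases hz0 : z = 0
        · rw [hz0]
          simp only [add_zero, sub_zero, norm_zero, div_zero, zero_mul, sub_self, abs_zero]
          exact mul_nonneg hKL (hωnn i 0)
        · have hnz : 0 < ‖z‖ := norm_pos_iff.2 hz0
          have hxmem : x ∈ Metric.closedBall x₀ (1 + Rω i) := by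
            rw [Metric.mem_closedBall]
            have := Metric.mem_ball.1 hx
            have h2 := hRω0 i
            linarith
          have hpmem : x + z ∈ Metric.closedBall x₀ (1 + Rω i) := by
            rw [Metric.mem_closedBall, dist_eq_norm]
            have h1 : ‖x + z - x₀‖ ≤ ‖x - x₀‖ + ‖z‖ := by
              rw [show x + z - x₀ = (x - x₀) + z by abel]
              exact norm_add_le _ _
            have h2 : ‖x - x₀‖ < 1 := by
              have := Metric.mem_ball.1 hx
              rwa [dist_eq_norm] at this
            linarith
          have hmmem : x - z ∈ Metric.closedBall x₀ (1 + Rω i) := by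
            rw [Metric.mem_closedBall, dist_eq_norm]
            have h1 : ‖x - z - x₀‖ ≤ ‖x - x₀‖ + ‖z‖ := by
              rw [show x - z - x₀ = (x - x₀) + (-z) by abel]
              exact le_trans (norm_add_le _ _) (by rw [norm_neg])
            have h2 : ‖x - x₀‖ < 1 := by
              have := Metric.mem_ball.1 hx
              rwa [dist_eq_norm] at this
            linarith
          have hd1 : |u (x + z) - u x| ≤ L i * ‖z‖ := by
            have := hLlip i (x + z) hpmem x hxmem
            simpa [add_sub_cancel_left] using this
          have hd2 : |u (x - z) - u x| ≤ L i * ‖z‖ := by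
            have := hLlip i (x - z) hmmem x hxmem
            have h3 : x - z - x = -z := by abel
            rwa [h3, norm_neg] at this
          have hA : |φ i (u x) (u (x + z)) - φ i (u x) (u x)| ≤ K i * (L i * ‖z‖) :=
            le_trans (hφd1 i (u x) (u (x + z)) (u x))
              (mul_le_mul_of_nonneg_left hd1 (hK0 i))
          have hB : |φ i (u (x - z)) (u x) - φ i (u x) (u x)| ≤ K i * (L i * ‖z‖) :=
            le_trans (hφd2 i (u (x - z)) (u x) (u x))
              (mul_le_mul_of_nonneg_left hd2 (hK0 i))
          have hnum : |φ i (u x) (u (x + z)) - φ i (u (x - z)) (u x)| ≤ 2 * K i * L i * ‖z‖ := by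
            have h4 : φ i (u x) (u (x + z)) - φ i (u (x - z)) (u x)
                = (φ i (u x) (u (x + z)) - φ i (u x) (u x))
                  - (φ i (u (x - z)) (u x) - φ i (u x) (u x)) := by ring
            rw [h4]
            calc |(φ i (u x) (u (x + z)) - φ i (u x) (u x))
                  - (φ i (u (x - z)) (u x) - φ i (u x) (u x))|
                ≤ |φ i (u x) (u (x + z)) - φ i (u x) (u x)|
                  + |φ i (u (x - z)) (u x) - φ i (u x) (u x)| := abs_sub _ _
              _ ≤ 2 * K i * L i * ‖z‖ := by linarith
          have habs : |(φ i (u x) (u (x + z)) - φ i (u (x - z)) (u x)) / ‖z‖ * ω i z|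
              = |φ i (u x) (u (x + z)) - φ i (u (x - z)) (u x)| / ‖z‖ * ω i z := by
            rw [abs_mul, abs_div, abs_of_nonneg (hωnn i z), abs_of_nonneg (norm_nonneg z)]
          rw [habs]
          apply mul_le_mul_of_nonneg_right _ (hωnn i z)
          rw [div_le_iff₀ hnz]
          linarith
    · exact integrable_finset_sum _ (fun i _ => (hωβint i).const_mul _)
    · apply Filter.Eventually.of_forall
      intro h
      have hterm : ∀ i : Fin k, Continuous (fun x =>
          (φ i (u x) (u (x + β i h)) - φ i (u (x - β i h)) (u x)) / ‖β i h‖ * ω i (β i h)) := by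
        intro i
        by_cases hz0 : β i h = 0
        · have : (fun x => (φ i (u x) (u (x + β i h)) - φ i (u (x - β i h)) (u x)) / ‖β i h‖
              * ω i (β i h)) = fun _ => 0 := by
            funext x
            rw [hz0]
            simp
          rw [this]
          exact continuous_const
        · have c1 : Continuous fun x : EuclideanSpace ℝ (Fin n) => u (x + β i h) :=
            hucont.comp (continuous_add_right (β i h))
          have c2 : Continuous fun x : EuclideanSpace ℝ (Fin n) => u (x - β i h) :=
            hucont.comp (continuous_sub_right (β i h))
          have c3 : Continuous fun x : EuclideanSpace ℝ (Fin n) =>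
              φ i (u x) (u (x + β i h)) :=
            ((hφC1 i).continuous).comp (hucont.prodMk c1)
          have c4 : Continuous fun x : EuclideanSpace ℝ (Fin n) =>
              φ i (u (x - β i h)) (u x) :=
            ((hφC1 i).continuous).comp (c2.prodMk hucont)
          exact (((c3.sub c4).div_const _).mul continuous_const)
      exact (continuous_finset_sum _ (fun i _ => hterm i)).continuousAt
  -- continuity of Lap u
  have hLapCont : Continuous (fun x => Lap u x) := by
    have heq2 : (fun x => Lap u x) = fun x => ∑ j : Fin n,
        fderiv ℝ (fun y => fderiv ℝ u y (EuclideanSpace.single j 1)) x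
          (EuclideanSpace.single j 1) := funext (hLap u)
    rw [heq2]
    apply continuous_finset_sum
    intro j _
    have hG : ContDiff ℝ 1 (fun y => fderiv ℝ u y (EuclideanSpace.single j 1)) :=
      contDiff_fderiv_apply hu _
    exact (hG.continuous_fderiv one_ne_zero).clm_apply continuous_const
  set c₁ : ℝ := (eLpNorm (fun y => max (g y) 0) ⊤ volume).toReal with hc₁def
  set c₂ : ℝ := (eLpNorm (fun y => max (-g y) 0) ⊤ volume).toReal with hc₂def
  have hgfin : eLpNorm g ⊤ volume ≠ ⊤ := ne_of_lt hginf.2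
  have hgplusfin : eLpNorm (fun y => max (g y) 0) ⊤ volume ≤ eLpNorm g ⊤ volume := by
    apply eLpNorm_mono
    intro x
    simp only [Real.norm_eq_abs]
    rcases le_or_gt (g x) 0 with h | h
    · rw [max_eq_right h]; simp [abs_nonneg]
    · rw [max_eq_left h.le]
  have hgminusfin : eLpNorm (fun y => max (-g y) 0) ⊤ volume ≤ eLpNorm g ⊤ volume := by
    apply eLpNorm_mono
    intro x
    simp only [Real.norm_eq_abs]
    rcases le_or_gt (-g x) 0 with h | h
    · rw [max_eq_right h]; simp [abs_nonneg]
    · rw [max_eq_left h.le, abs_neg]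
  have hgae1 : ∀ᵐ x, g x ≤ c₁ := by
    have h1 := MeasureTheory.ae_le_eLpNormEssSup (f := fun y => max (g y) 0)
      (μ := (volume : Measure (EuclideanSpace ℝ (Fin n))))
    have hfin' : eLpNormEssSup (fun y => max (g y) 0)
        (volume : Measure (EuclideanSpace ℝ (Fin n))) ≠ ⊤ := by
      rw [← eLpNorm_exponent_top]
      exact (lt_of_le_of_lt hgplusfin hginf.2).ne
    filter_upwards [h1] with x hx
    have h2 := ENNReal.toReal_mono hfin' hx
    rw [hc₁def, eLpNorm_exponent_top]
    rw [toReal_enorm, Real.norm_eq_abs] at h2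
    have : g x ≤ |max (g x) 0| := le_trans (le_max_left _ _) (le_abs_self _)
    linarith
  have hgae2 : ∀ᵐ x, -c₂ ≤ g x := by
    have h1 := MeasureTheory.ae_le_eLpNormEssSup (f := fun y => max (-g y) 0)
      (μ := (volume : Measure (EuclideanSpace ℝ (Fin n))))
    have hfin' : eLpNormEssSup (fun y => max (-g y) 0)
        (volume : Measure (EuclideanSpace ℝ (Fin n))) ≠ ⊤ := by
      rw [← eLpNorm_exponent_top]
      exact (lt_of_le_of_lt hgminusfin hginf.2).ne
    filter_upwards [h1] with x hx
    have h2 := ENNReal.toReal_mono hfin' hx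
    rw [hc₂def, eLpNorm_exponent_top]
    rw [toReal_enorm, Real.norm_eq_abs] at h2
    have : -g x ≤ |max (-g x) 0| := le_trans (le_max_left _ _) (le_abs_self _)
    linarith
  have hHcont : Continuous (fun x => u x + lam * Bop u x - ε * Lap u x) :=
    ((hucont.add (continuous_const.mul hBopCont)).sub (continuous_const.mul hLapCont))
  have hHle : ∀ x, u x + lam * Bop u x - ε * Lap u x ≤ c₁ := by
    apply le_of_ae_le_of_continuous hHcont
    filter_upwards [heq, hgae1] with x h1 h2
    rw [h1]; exact h2
  have hHge : ∀ x, -c₂ ≤ u x + lam * Bop u x - ε * Lap u x := by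
    have := le_of_ae_le_of_continuous (f := fun x => -(u x + lam * Bop u x - ε * Lap u x))
      (c := c₂) (hHcont.neg) ?_
    · intro x
      have h3 := this x
      linarith
    · filter_upwards [heq, hgae2] with x h1 h2
      rw [h1]; linarith
  set CC : ℝ := lam * (2 * ∑ i, K i) + ε * n with hCCdef
  have hCC0 : 0 ≤ CC := by
    have : 0 ≤ ∑ i, K i := Finset.sum_nonneg fun i _ => hK0 i
    positivity
  -- the key quantitative bounds
  have key_max : ∀ δ : ℝ, 0 < δ → ∀ y, u y ≤ c₁ + δ * (CC + psiE y) := by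
    intro δ hδ y
    set w : EuclideanSpace ℝ (Fin n) → ℝ := fun x => u x - δ * psiE x with hwdef
    have hwcont : Continuous w := hucont.sub (continuous_const.mul psiE_cont)
    set R : ℝ := (2*M + δ + 1)/δ with hRdef
    have hR0 : 0 ≤ R := by positivity
    obtain ⟨x₀, hx₀mem, hx₀max⟩ := (isCompact_closedBall (0 : EuclideanSpace ℝ (Fin n)) R).exists_isMaxOn
      ⟨0, Metric.mem_closedBall_self hR0⟩ hwcont.continuousOn
    have hψ0 : psiE (0 : EuclideanSpace ℝ (Fin n)) = 1 := by
      unfold psiE; simp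
    have hglobal : ∀ z, w z ≤ w x₀ := by
      intro z
      rcases le_or_gt ‖z‖ R with hz | hz
      · exact hx₀max (by simpa [Metric.mem_closedBall, dist_zero_right] using hz)
      · have h0 : w 0 ≤ w x₀ := hx₀max (Metric.mem_closedBall_self hR0)
        have hψz : ‖z‖ ≤ psiE z := psiE_ge_norm z
        have hz1 : w z ≤ M - δ * ‖z‖ := by
          have h1 := (abs_le.1 (hM z)).2
          have h2 : δ * ‖z‖ ≤ δ * psiE z := mul_le_mul_of_nonneg_left hψz hδ.le
          simp only [hwdef]
          linarith
        have hw0 : -M - δ ≤ w 0 := by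
          have h1 := (abs_le.1 (hM 0)).1
          simp only [hwdef, hψ0]
          linarith
        have h3 : δ * R < δ * ‖z‖ := mul_lt_mul_of_pos_left hz hδ
        have h4 : δ * R = 2*M + δ + 1 := by
          rw [hRdef]; field_simp
        linarith
    -- lower bound on Bop u x₀
    have hBopLB : -(2 * δ * ∑ i, K i) ≤ Bop u x₀ := by
      rw [hBop u x₀]
      set F : EuclideanSpace ℝ (Fin n) → ℝ := fun h => ∑ i : Fin k,
        (φ i (u x₀) (u (x₀ + β i h)) - φ i (u (x₀ - β i h)) (u x₀)) / ‖β i h‖ * ω i (β i h)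
        with hFdef
      set G : EuclideanSpace ℝ (Fin n) → ℝ := fun h => ∑ i : Fin k,
        (-(2 * K i * δ)) * ω i (β i h) with hGdef
      have hGle : ∀ h, G h ≤ F h := by
        intro h
        apply Finset.sum_le_sum
        intro i _
        set z := β i h with hzdef
        by_cases hz0 : z = 0
        · rw [hz0]
          simp only [add_zero, sub_zero, norm_zero, div_zero, zero_mul, sub_self]
          apply mul_nonpos_of_nonpos_of_nonneg
          · have := hK0 i
            nlinarith
          · exact hωnn i 0
        · have hz : 0 < ‖z‖ := norm_pos_iff.2 hz0
          set a := u x₀ with hadef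
          have hplus : u (x₀ + z) ≤ a + δ * ‖z‖ := by
            have h1 := hglobal (x₀ + z)
            have h2 : psiE (x₀ + z) ≤ psiE x₀ + ‖z‖ := by
              have := psiE_lip x₀ (x₀ + z)
              simpa using this
            simp only [hwdef] at h1
            nlinarith
          have hminus : u (x₀ - z) ≤ a + δ * ‖z‖ := by
            have h1 := hglobal (x₀ - z)
            have h2 : psiE (x₀ - z) ≤ psiE x₀ + ‖z‖ := by
              have := psiE_lip x₀ (x₀ - z)
              simpa [norm_sub_rev] using this
            simp only [hwdef] at h1
            nlinarith
          have e1 : φ i a (a + δ * ‖z‖) ≤ φ i a (u (x₀ + z)) := hφanti i a hplus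
          have e2 : φ i a a - K i * (δ * ‖z‖) ≤ φ i a (a + δ * ‖z‖) :=
            hφest1 i a (δ * ‖z‖) (by positivity)
          have e3 : φ i (u (x₀ - z)) a ≤ φ i (a + δ * ‖z‖) a := hφmono i a hminus
          have e4 : φ i (a + δ * ‖z‖) a ≤ φ i a a + K i * (δ * ‖z‖) :=
            hφest2 i a (δ * ‖z‖) (by positivity)
          have hnum : -(2 * K i * δ) * ‖z‖ ≤ φ i a (u (x₀ + z)) - φ i (u (x₀ - z)) a := by
            nlinarith
          have hdiv : -(2 * K i * δ) ≤ (φ i a (u (x₀ + z)) - φ i (u (x₀ - z)) a) / ‖z‖ := by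
            rw [le_div_iff₀ hz]
            linarith
          exact mul_le_mul_of_nonneg_right hdiv (hωnn i z)
      have hGint : Integrable G := integrable_finset_sum _ (fun i _ => (hωβint i).const_mul _)
      have hGval : ∫ h, G h = -(2 * δ * ∑ i, K i) := by
        rw [hGdef]
        rw [integral_finset_sum _ (fun i _ => (hωβint i).const_mul _)]
        have : ∀ i : Fin k, ∫ h, (-(2 * K i * δ)) * ω i (β i h) = -(2 * K i * δ) := by
          intro i
          rw [integral_const_mul, hωnorm i, mul_one]
        rw [Finset.sum_congr rfl (fun i _ => this i)]
        rw [Finset.mul_sum, ← Finset.sum_neg_distrib]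
        exact Finset.sum_congr rfl fun i _ => by ring
      by_cases hFint : Integrable F
      · rw [← hGval]
        exact integral_mono hGint hFint hGle
      · rw [integral_undef hFint]
        have h1 : 0 ≤ ∑ i : Fin k, K i := Finset.sum_nonneg fun i _ => hK0 i
        nlinarith
    -- upper bound on Lap u x₀
    have hLapUB : Lap u x₀ ≤ δ * n := by
      rw [hLap u x₀]
      have per_j : ∀ j : Fin n,
          fderiv ℝ (fun y => fderiv ℝ u y (EuclideanSpace.single j 1)) x₀
            (EuclideanSpace.single j 1) ≤ δ := by
        intro j
        set v := EuclideanSpace.single j (1:ℝ) with hvdef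
        set su : ℝ → ℝ := fun t => u (x₀ + t • v) with hsudef
        set b := x₀ j with hbdef
        set c := 1 + ‖x₀‖^2 with hcdef
        have hcond : 1 ≤ c - b^2 := psiE_cond x₀ j
        have hsψ : (fun t : ℝ => psiE (x₀ + t • v)) = sq1 b c := psiE_slice x₀ j
        set m : ℝ → ℝ := fun t => su t - δ * sq1 b c t with hmdef
        have hm_eq : ∀ t, m t = w (x₀ + t • v) := by
          intro t
          simp only [hmdef, hsudef, hwdef]
          rw [← congrFun hsψ t]
        have hmax : IsLocalMax m 0 := by
          apply Filter.Eventually.mono (Filter.Eventually.of_forall (fun t => hglobal (x₀ + t • v)))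
          intro t ht
          rw [hm_eq t, hm_eq 0]
          simpa using ht
        have hsu_diff : Differentiable ℝ su := fun t => (hasDerivAt_slice hud x₀ v t).differentiableAt
        have hsψ_diff : Differentiable ℝ (sq1 b c) := sq1_differentiable b c hcond
        have hm_diff : Differentiable ℝ m := hsu_diff.sub (hsψ_diff.const_mul δ)
        have hderivm : deriv m = fun t => deriv su t - δ * deriv (sq1 b c) t := by
          funext t
          rw [hmdef]
          rw [deriv_fun_sub (hsu_diff t) ((hsψ_diff t).const_mul δ), deriv_const_mul δ (hsψ_diff t)]
        have hsu' : DifferentiableAt ℝ (deriv su) 0 := differentiableAt_deriv_slice hu x₀ v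
        have hsψ' := sq1_derivAt0 b c hcond
        have hm' : DifferentiableAt ℝ (deriv m) 0 := by
          rw [hderivm]; exact hsu'.sub (hsψ'.1.const_mul δ)
        have h2nd := secondDeriv_nonpos_of_isLocalMax hm_diff hm' hmax
        have hsplit : deriv (deriv m) 0 = deriv (deriv su) 0 - δ * deriv (deriv (sq1 b c)) 0 := by
          rw [hderivm]
          rw [deriv_fun_sub hsu' (hsψ'.1.const_mul δ), deriv_const_mul δ hsψ'.1]
        have hfin : deriv (deriv su) 0 ≤ δ := by nlinarith [hsψ'.2]
        have hconn := secondDeriv_slice hu x₀ v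
        rw [← hsudef] at hconn
        rw [← hconn]
        exact hfin
      calc (∑ j : Fin n, fderiv ℝ (fun y => fderiv ℝ u y (EuclideanSpace.single j 1)) x₀
            (EuclideanSpace.single j 1)) ≤ ∑ _j : Fin n, δ :=
              Finset.sum_le_sum (fun j _ => per_j j)
        _ = δ * n := by simp [Finset.sum_const, mul_comm]
    have hHx₀ := hHle x₀
    have hb := mul_le_mul_of_nonneg_left hBopLB hlam.le
    have hl := mul_le_mul_of_nonneg_left hLapUB hε.le
    have hux₀ : u x₀ ≤ c₁ + δ * CC := by
      rw [hCCdef]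
      nlinarith
    have hy := hglobal y
    have hψx₀ : 0 ≤ psiE x₀ := psiE_nonneg x₀
    simp only [hwdef] at hy
    nlinarith [mul_nonneg hδ.le hψx₀]
  have key_min : ∀ δ : ℝ, 0 < δ → ∀ y, -(c₂ + δ * (CC + psiE y)) ≤ u y := by
    intro δ hδ y
    set w : EuclideanSpace ℝ (Fin n) → ℝ := fun x => u x + δ * psiE x with hwdef
    have hwcont : Continuous w := hucont.add (continuous_const.mul psiE_cont)
    set R : ℝ := (2*M + δ + 1)/δ with hRdef
    have hR0 : 0 ≤ R := by positivity
    obtain ⟨x₀, hx₀mem, hx₀max⟩ := (isCompact_closedBall (0 : EuclideanSpace ℝ (Fin n)) R).exists_isMinOn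
      ⟨0, Metric.mem_closedBall_self hR0⟩ hwcont.continuousOn
    have hψ0 : psiE (0 : EuclideanSpace ℝ (Fin n)) = 1 := by
      unfold psiE; simp
    have hglobal : ∀ z, w x₀ ≤ w z := by
      intro z
      rcases le_or_gt ‖z‖ R with hz | hz
      · exact hx₀max (by simpa [Metric.mem_closedBall, dist_zero_right] using hz)
      · have h0 : w x₀ ≤ w 0 := hx₀max (Metric.mem_closedBall_self hR0)
        have hψz : ‖z‖ ≤ psiE z := psiE_ge_norm z
        have hz1 : -M + δ * ‖z‖ ≤ w z := by
          have h1 := (abs_le.1 (hM z)).1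
          have h2 : δ * ‖z‖ ≤ δ * psiE z := mul_le_mul_of_nonneg_left hψz hδ.le
          simp only [hwdef]
          linarith
        have hw0 : w 0 ≤ M + δ := by
          have h1 := (abs_le.1 (hM 0)).2
          simp only [hwdef, hψ0]
          linarith
        have h3 : δ * R < δ * ‖z‖ := mul_lt_mul_of_pos_left hz hδ
        have h4 : δ * R = 2*M + δ + 1 := by
          rw [hRdef]; field_simp
        linarith
    -- upper bound on Bop u x₀
    have hBopUB : Bop u x₀ ≤ 2 * δ * ∑ i, K i := by
      rw [hBop u x₀]
      set F : EuclideanSpace ℝ (Fin n) → ℝ := fun h => ∑ i : Fin k,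
        (φ i (u x₀) (u (x₀ + β i h)) - φ i (u (x₀ - β i h)) (u x₀)) / ‖β i h‖ * ω i (β i h)
        with hFdef
      set G : EuclideanSpace ℝ (Fin n) → ℝ := fun h => ∑ i : Fin k,
        (2 * K i * δ) * ω i (β i h) with hGdef
      have hGle : ∀ h, F h ≤ G h := by
        intro h
        apply Finset.sum_le_sum
        intro i _
        set z := β i h with hzdef
        by_cases hz0 : z = 0
        · rw [hz0]
          simp only [add_zero, sub_zero, norm_zero, div_zero, zero_mul, sub_self]
          apply mul_nonneg
          · have := hK0 i
            nlinarith
          · exact hωnn i 0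
        · have hz : 0 < ‖z‖ := norm_pos_iff.2 hz0
          set a := u x₀ with hadef
          have hplus : a - δ * ‖z‖ ≤ u (x₀ + z) := by
            have h1 := hglobal (x₀ + z)
            have h2 : psiE (x₀ + z) ≤ psiE x₀ + ‖z‖ := by
              have := psiE_lip x₀ (x₀ + z)
              simpa using this
            simp only [hwdef] at h1
            nlinarith
          have hminus : a - δ * ‖z‖ ≤ u (x₀ - z) := by
            have h1 := hglobal (x₀ - z)
            have h2 : psiE (x₀ - z) ≤ psiE x₀ + ‖z‖ := by
              have := psiE_lip x₀ (x₀ - z)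
              simpa [norm_sub_rev] using this
            simp only [hwdef] at h1
            nlinarith
          have e1 : φ i a (u (x₀ + z)) ≤ φ i a (a - δ * ‖z‖) := hφanti i a hplus
          have e2 : φ i a (a - δ * ‖z‖) ≤ φ i a a + K i * (δ * ‖z‖) :=
            hφest3 i a (δ * ‖z‖) (by positivity)
          have e3 : φ i (a - δ * ‖z‖) a ≤ φ i (u (x₀ - z)) a := hφmono i a hminus
          have e4 : φ i a a - K i * (δ * ‖z‖) ≤ φ i (a - δ * ‖z‖) a :=
            hφest4 i a (δ * ‖z‖) (by positivity)
          have hnum : φ i a (u (x₀ + z)) - φ i (u (x₀ - z)) a ≤ (2 * K i * δ) * ‖z‖ := by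
            nlinarith
          have hdiv : (φ i a (u (x₀ + z)) - φ i (u (x₀ - z)) a) / ‖z‖ ≤ 2 * K i * δ := by
            rw [div_le_iff₀ hz]
            linarith
          exact mul_le_mul_of_nonneg_right hdiv (hωnn i z)
      have hGint : Integrable G := integrable_finset_sum _ (fun i _ => (hωβint i).const_mul _)
      have hGval : ∫ h, G h = 2 * δ * ∑ i, K i := by
        rw [hGdef]
        rw [integral_finset_sum _ (fun i _ => (hωβint i).const_mul _)]
        have : ∀ i : Fin k, ∫ h, (2 * K i * δ) * ω i (β i h) = 2 * K i * δ := by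
          intro i
          rw [integral_const_mul, hωnorm i, mul_one]
        rw [Finset.sum_congr rfl (fun i _ => this i)]
        rw [Finset.mul_sum]
        exact Finset.sum_congr rfl fun i _ => by ring
      by_cases hFint : Integrable F
      · rw [← hGval]
        exact integral_mono hFint hGint hGle
      · rw [integral_undef hFint]
        have h1 : 0 ≤ ∑ i : Fin k, K i := Finset.sum_nonneg fun i _ => hK0 i
        nlinarith
    -- lower bound on Lap u x₀
    have hLapLB : -(δ * n) ≤ Lap u x₀ := by
      rw [hLap u x₀]
      have per_j : ∀ j : Fin n,
          -δ ≤ fderiv ℝ (fun y => fderiv ℝ u y (EuclideanSpace.single j 1)) x₀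
            (EuclideanSpace.single j 1) := by
        intro j
        set v := EuclideanSpace.single j (1:ℝ) with hvdef
        set su : ℝ → ℝ := fun t => u (x₀ + t • v) with hsudef
        set b := x₀ j with hbdef
        set c := 1 + ‖x₀‖^2 with hcdef
        have hcond : 1 ≤ c - b^2 := psiE_cond x₀ j
        have hsψ : (fun t : ℝ => psiE (x₀ + t • v)) = sq1 b c := psiE_slice x₀ j
        set m : ℝ → ℝ := fun t => su t + δ * sq1 b c t with hmdef
        have hm_eq : ∀ t, m t = w (x₀ + t • v) := by
          intro t
          simp only [hmdef, hsudef, hwdef]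
          rw [← congrFun hsψ t]
        have hmin : IsLocalMin m 0 := by
          apply Filter.Eventually.mono (Filter.Eventually.of_forall (fun t => hglobal (x₀ + t • v)))
          intro t ht
          rw [hm_eq t, hm_eq 0]
          simpa using ht
        have hsu_diff : Differentiable ℝ su := fun t => (hasDerivAt_slice hud x₀ v t).differentiableAt
        have hsψ_diff : Differentiable ℝ (sq1 b c) := sq1_differentiable b c hcond
        have hm_diff : Differentiable ℝ m := hsu_diff.add (hsψ_diff.const_mul δ)
        have hderivm : deriv m = fun t => deriv su t + δ * deriv (sq1 b c) t := by
          funext t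
          rw [hmdef]
          rw [deriv_fun_add (hsu_diff t) ((hsψ_diff t).const_mul δ), deriv_const_mul δ (hsψ_diff t)]
        have hsu' : DifferentiableAt ℝ (deriv su) 0 := differentiableAt_deriv_slice hu x₀ v
        have hsψ' := sq1_derivAt0 b c hcond
        have hm' : DifferentiableAt ℝ (deriv m) 0 := by
          rw [hderivm]; exact hsu'.add (hsψ'.1.const_mul δ)
        have h2nd := secondDeriv_nonneg_of_isLocalMin hm_diff hm' hmin
        have hsplit : deriv (deriv m) 0 = deriv (deriv su) 0 + δ * deriv (deriv (sq1 b c)) 0 := by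
          rw [hderivm]
          rw [deriv_fun_add hsu' (hsψ'.1.const_mul δ), deriv_const_mul δ hsψ'.1]
        have hfin : -δ ≤ deriv (deriv su) 0 := by nlinarith [hsψ'.2]
        have hconn := secondDeriv_slice hu x₀ v
        rw [← hsudef] at hconn
        rw [← hconn]
        exact hfin
      calc -(δ * n) = ∑ _j : Fin n, -δ := by
            simp [Finset.sum_const, mul_comm]
        _ ≤ ∑ j : Fin n, fderiv ℝ (fun y => fderiv ℝ u y (EuclideanSpace.single j 1)) x₀
            (EuclideanSpace.single j 1) := Finset.sum_le_sum (fun j _ => per_j j)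
    have hHx₀ := hHge x₀
    have hb := mul_le_mul_of_nonneg_left hBopUB hlam.le
    have hl := mul_le_mul_of_nonneg_left hLapLB hε.le
    have hux₀ : -(c₂ + δ * CC) ≤ u x₀ := by
      rw [hCCdef]
      nlinarith
    have hy := hglobal y
    have hψx₀ : 0 ≤ psiE x₀ := psiE_nonneg x₀
    simp only [hwdef] at hy
    nlinarith [mul_nonneg hδ.le hψx₀]
  have hupper : ∀ y, u y ≤ c₁ := by
    intro y
    apply le_of_forall_pos_le_add
    intro ρ hρ
    have hpos : 0 < CC + psiE y + 1 := by linarith [psiE_nonneg y, hCC0]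
    have hδ : 0 < ρ / (CC + psiE y + 1) := by positivity
    have := key_max _ hδ y
    have h2 : ρ / (CC + psiE y + 1) * (CC + psiE y) ≤ ρ := by
      rw [div_mul_eq_mul_div, div_le_iff₀ hpos]
      nlinarith [psiE_nonneg y, hCC0]
    linarith
  have hlower : ∀ y, -c₂ ≤ u y := by
    intro y
    rw [show -c₂ = -(c₂) by rfl]
    have : ∀ ρ > 0, u y ≥ -c₂ - ρ := by
      intro ρ hρ
      have hpos : 0 < CC + psiE y + 1 := by linarith [psiE_nonneg y, hCC0]
      have hδ : 0 < ρ / (CC + psiE y + 1) := by positivity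
      have := key_min _ hδ y
      have h2 : ρ / (CC + psiE y + 1) * (CC + psiE y) ≤ ρ := by
        rw [div_mul_eq_mul_div, div_le_iff₀ hpos]
        nlinarith [psiE_nonneg y, hCC0]
      linarith
    by_contra hc
    push_neg at hc
    have := this ((-c₂ - u y)/2) (by linarith)
    linarith
  constructor
  · exact ae_of_all _ fun x => ⟨hlower x, hupper x⟩
  · have hc₁le : c₁ ≤ (eLpNorm g ⊤ volume).toReal := by
      rw [hc₁def]
      exact ENNReal.toReal_mono hgfin hgplusfin
    have hc₂le : c₂ ≤ (eLpNorm g ⊤ volume).toReal := by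
      rw [hc₂def]
      exact ENNReal.toReal_mono hgfin hgminusfin
    have hbd : ∀ x, ‖u x‖ ≤ (eLpNorm g ⊤ volume).toReal := by
      intro x
      rw [Real.norm_eq_abs, abs_le]
      constructor
      · linarith [hlower x]
      · linarith [hupper x]
    calc eLpNorm u ⊤ volume = eLpNormEssSup u volume := eLpNorm_exponent_top
      _ ≤ ENNReal.ofReal ((eLpNorm g ⊤ volume).toReal) :=
          eLpNormEssSup_le_of_ae_bound (ae_of_all _ hbd)
      _ = eLpNorm g ⊤ volume := ENNReal.ofReal_toReal hgfin
end

section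
/- Let φ : ℝ × ℝ → ℝ be nondecreasing in its first argument and nonincreasing in its second argument, and define q̃(a,b,c) = φ(max{a,c}, max{b,c}) − φ(min{a,c}, min{b,c}). Then for all a, b, c ∈ ℝ: sign₀(b − c)·(φ(a,b) − φ(c,c)) ≤ q̃(a,b,c) and q̃(a,b,c) ≤ sign₀(a − c)·(φ(a,b) − φ(c,c)). -/
theorem stmt16 (φ : ℝ → ℝ → ℝ)
    (hmono : ∀ b, Monotone fun a => φ a b)
    (hanti : ∀ a, Antitone fun b => φ a b)
    (a b c : ℝ) :
    Real.sign (b - c) * (φ a b - φ c c) ≤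
      φ (max a c) (max b c) - φ (min a c) (min b c) ∧
    φ (max a c) (max b c) - φ (min a c) (min b c) ≤
      Real.sign (a - c) * (φ a b - φ c c) := by
  rcases lt_trichotomy a c with ha | ha | ha <;>
    rcases lt_trichotomy b c with hb | hb | hb
  · rw [Real.sign_of_neg (by linarith), Real.sign_of_neg (by linarith),
      max_eq_right ha.le, max_eq_right hb.le, min_eq_left ha.le, min_eq_left hb.le]
    constructor <;> linarith
  · rw [hb, sub_self, Real.sign_zero, Real.sign_of_neg (by linarith),
      max_eq_right ha.le, max_self, min_eq_left ha.le, min_self, zero_mul, neg_one_mul]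
    have h := hmono c ha.le
    simp only at h
    constructor <;> linarith
  · rw [Real.sign_of_pos (by linarith), Real.sign_of_neg (by linarith),
      max_eq_right ha.le, max_eq_left hb.le, min_eq_left ha.le, min_eq_right hb.le,
      one_mul, neg_one_mul]
    have h1 := hmono b ha.le
    have h2 := hmono c ha.le
    have h3 := hanti a hb.le
    have h4 := hanti c hb.le
    simp only at h1 h2 h3 h4
    constructor <;> linarith
  · rw [ha, sub_self, Real.sign_zero, Real.sign_of_neg (by linarith),
      max_self, max_eq_right hb.le, min_self, min_eq_left hb.le, zero_mul, neg_one_mul]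
    have h := hanti c hb.le
    simp only at h
    constructor <;> linarith
  · rw [ha, hb]; simp
  · rw [ha, sub_self, Real.sign_zero, Real.sign_of_pos (by linarith),
      max_self, max_eq_left hb.le, min_self, min_eq_right hb.le, zero_mul, one_mul]
    have h := hanti c hb.le
    simp only at h
    constructor <;> linarith
  · rw [Real.sign_of_neg (by linarith), Real.sign_of_pos (by linarith),
      max_eq_left ha.le, max_eq_right hb.le, min_eq_right ha.le, min_eq_left hb.le,
      one_mul, neg_one_mul]
    have h1 := hmono b ha.le
    have h2 := hmono c ha.le
    have h3 := hanti a hb.le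
    have h4 := hanti c hb.le
    simp only at h1 h2 h3 h4
    constructor <;> linarith
  · rw [hb, sub_self, Real.sign_zero, Real.sign_of_pos (by linarith),
      max_eq_left ha.le, max_self, min_eq_right ha.le, min_self, zero_mul, one_mul]
    have h := hmono c ha.le
    simp only at h
    constructor <;> linarith
  · rw [Real.sign_of_pos (by linarith), Real.sign_of_pos (by linarith),
      max_eq_left ha.le, max_eq_left hb.le, min_eq_right ha.le, min_eq_right hb.le]
    constructor <;> linarith
end
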